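/- arXiv:1803.08033 — 7 statements merged into one kernel-verified Lean document; each statement's English description precedes it below -/
import Mathlib

section
/- For every prime p, every non-trivial subgroup H of the additive group (ℚ_p, +) is essential in ℚ_p: for every non-trivial closed subgroup N of ℚ_p, the intersection H ∩ N is non-trivial. -/
/-- If `N` is a closed additive subgroup of `ℚ_[p]` and `x ∈ N`, then `c • x ∈ N`
for every `c ∈ ℤ_[p]`. -/
lemma padicInt_smul_mem_closed_addSubgroup {p : ℕ} [Fact p.Prime]
    (N : AddSubgroup ℚ_[p]) (hNclosed : IsClosed (N : Set ℚ_[p]))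
    {x : ℚ_[p]} (hx : x ∈ N) (c : ℤ_[p]) : (c : ℚ_[p]) * x ∈ N := by
  have hS : IsClosed {c : ℤ_[p] | (c : ℚ_[p]) * x ∈ N} := by
    have : Continuous fun c : ℤ_[p] => (c : ℚ_[p]) * x :=
      continuous_subtype_val.mul continuous_const
    exact hNclosed.preimage this
  have hdense : Dense {c : ℤ_[p] | (c : ℚ_[p]) * x ∈ N} := by
    apply PadicInt.denseRange_intCast.mono
    rintro _ ⟨n, rfl⟩
    have : ((n : ℤ_[p]) : ℚ_[p]) * x = n • x := by
      push_cast
      rw [zsmul_eq_mul]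
    simpa [Set.mem_setOf_eq, this] using zsmul_mem hx n
  have := hdense.closure_eq
  rw [hS.closure_eq] at this
  exact (Set.eq_univ_iff_forall.mp this) c

/-- For every prime `p`, every non-trivial subgroup `H` of the additive group
`(ℚ_p, +)` is essential in `ℚ_p`: for every non-trivial closed subgroup `N` of `ℚ_p`,
the intersection `H ∩ N` is non-trivial. -/
theorem nontrivial_subgroup_essential_in_padic_rationals
    (p : ℕ) [Fact p.Prime] (H : AddSubgroup ℚ_[p]) (hH : H ≠ ⊥)
    (N : AddSubgroup ℚ_[p]) (hN : N ≠ ⊥) (hNclosed : IsClosed (N : Set ℚ_[p])) :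
    H ⊓ N ≠ ⊥ := by
  obtain ⟨⟨h, hhH⟩, hh0'⟩ := (AddSubgroup.ne_bot_iff_exists_ne_zero).mp hH
  obtain ⟨⟨x, hxN⟩, hx0'⟩ := (AddSubgroup.ne_bot_iff_exists_ne_zero).mp hN
  have hh0 : h ≠ 0 := by simpa [Subtype.ext_iff] using hh0'
  have hx0 : x ≠ 0 := by simpa [Subtype.ext_iff] using hx0'
  -- choose k with ‖p^k * h‖ ≤ ‖x‖
  have hp1 : (1 : ℝ) < p := by exact_mod_cast (Fact.out : p.Prime).one_lt
  obtain ⟨k, hk⟩ : ∃ k : ℕ, ‖(h : ℚ_[p])‖ / ‖x‖ ≤ (p : ℝ) ^ k := by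
    obtain ⟨k, hk⟩ := pow_unbounded_of_one_lt (‖(h : ℚ_[p])‖ / ‖x‖) hp1
    exact ⟨k, hk.le⟩
  set y : ℚ_[p] := (p : ℚ_[p]) ^ k * h with hy
  have hy0 : y ≠ 0 := by
    apply mul_ne_zero _ hh0
    exact pow_ne_zero _ (by exact_mod_cast (Fact.out : p.Prime).ne_zero)
  have hnormy : ‖y‖ ≤ ‖x‖ := by
    have hxpos : 0 < ‖x‖ := norm_pos_iff.mpr hx0
    have : ‖(h : ℚ_[p])‖ ≤ (p : ℝ) ^ k * ‖x‖ := by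
      rw [div_le_iff₀ hxpos] at hk; linarith [hk]
    rw [hy, norm_mul, norm_pow, Padic.norm_p]
    rw [inv_pow]
    rw [inv_mul_le_iff₀ (by positivity)]
    exact this
  have hyH : y ∈ H := by
    have : y = ((p : ℤ) ^ k) • h := by
      rw [zsmul_eq_mul]; push_cast; ring
    rw [this]; exact zsmul_mem hhH _
  have hyN : y ∈ N := by
    have hc : ‖y / x‖ ≤ 1 := by
      rw [norm_div, div_le_one (norm_pos_iff.mpr hx0)]; exact hnormy
    have := padicInt_smul_mem_closed_addSubgroup N hNclosed hxN ⟨y / x, hc⟩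
    simpa [div_mul_cancel₀ _ hx0] using this
  exact AddSubgroup.ne_bot_iff_exists_ne_zero.mpr
    ⟨⟨y, hyH, hyN⟩, by simpa [Subtype.ext_iff] using hy0⟩
end

section
/- For every prime p, if H is a non-abelian subgroup of L = (ℚ_p, +) ⋊ ℚ_p^*, then the center of H is trivial. -/
/-- The topological semidirect product `L = (ℚ_p, +) ⋊ ℚ_p^*`: the underlying set is
`ℚ_p × (ℚ_p \ {0})` (the second coordinate being an invertible `p`-adic number) with
multiplication `(a, b)(c, d) = (a + b·c, b·d)` and the product topology. -/
@[ext] structure PadicAffine (p : ℕ) [Fact p.Prime] : Type where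
  a : ℚ_[p]
  b : ℚ_[p]ˣ

namespace PadicAffine

variable {p : ℕ} [Fact p.Prime]

noncomputable instance : Mul (PadicAffine p) :=
  ⟨fun x y => ⟨x.a + (x.b : ℚ_[p]) * y.a, x.b * y.b⟩⟩

noncomputable instance : One (PadicAffine p) := ⟨⟨0, 1⟩⟩

noncomputable instance : Inv (PadicAffine p) :=
  ⟨fun x => ⟨-(((x.b⁻¹ : ℚ_[p]ˣ) : ℚ_[p]) * x.a), x.b⁻¹⟩⟩

@[simp] lemma mul_a (x y : PadicAffine p) : (x * y).a = x.a + (x.b : ℚ_[p]) * y.a := rfl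
@[simp] lemma mul_b (x y : PadicAffine p) : (x * y).b = x.b * y.b := rfl
@[simp] lemma one_a : (1 : PadicAffine p).a = 0 := rfl
@[simp] lemma one_b : (1 : PadicAffine p).b = 1 := rfl
@[simp] lemma inv_a (x : PadicAffine p) :
    (x⁻¹).a = -(((x.b⁻¹ : ℚ_[p]ˣ) : ℚ_[p]) * x.a) := rfl
@[simp] lemma inv_b (x : PadicAffine p) : (x⁻¹).b = x.b⁻¹ := rfl

noncomputable instance : Group (PadicAffine p) where
  mul_assoc x y z := by
    ext
    · simp only [mul_a, mul_b, Units.val_mul]; ring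
    · simp [mul_assoc]
  one_mul x := by ext <;> simp
  mul_one x := by ext <;> simp
  inv_mul_cancel x := by ext <;> simp

/-- The topology of `L`: the subspace topology induced from `ℚ_p × ℚ_p`
(i.e. the product topology of `ℚ_p × ℚ_p^*`). -/
noncomputable instance : TopologicalSpace (PadicAffine p) :=
  TopologicalSpace.induced (fun x => ((x.a, (x.b : ℚ_[p])) : ℚ_[p] × ℚ_[p])) inferInstance

lemma isInducing_toProd :
    Topology.IsInducing (fun x : PadicAffine p => ((x.a, (x.b : ℚ_[p])) : ℚ_[p] × ℚ_[p])) :=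
  ⟨rfl⟩

lemma isEmbedding_toProd :
    Topology.IsEmbedding (fun x : PadicAffine p => ((x.a, (x.b : ℚ_[p])) : ℚ_[p] × ℚ_[p])) := by
  refine ⟨isInducing_toProd, fun x y h => ?_⟩
  ext
  · exact congrArg Prod.fst h
  · exact congrArg Prod.snd h

lemma continuous_aCoord : Continuous fun x : PadicAffine p => x.a :=
  (continuous_fst.comp isInducing_toProd.continuous)

lemma continuous_bCoord : Continuous fun x : PadicAffine p => (x.b : ℚ_[p]) :=
  (continuous_snd.comp isInducing_toProd.continuous)

instance : T2Space (PadicAffine p) := isEmbedding_toProd.t2Space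

noncomputable instance : IsTopologicalGroup (PadicAffine p) where
  continuous_mul := by
    apply isInducing_toProd.continuous_iff.2
    refine Continuous.prodMk ?_ ?_
    · exact ((continuous_aCoord.comp continuous_fst).add
        ((continuous_bCoord.comp continuous_fst).mul (continuous_aCoord.comp continuous_snd)))
    · exact (continuous_bCoord.comp continuous_fst).mul (continuous_bCoord.comp continuous_snd)
  continuous_inv := by
    apply isInducing_toProd.continuous_iff.2
    have hb : Continuous fun x : PadicAffine p => ((x.b : ℚ_[p]))⁻¹ :=
      continuous_bCoord.inv₀ fun x => Units.ne_zero x.b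
    have hbinv : (fun x : PadicAffine p => ((x.b⁻¹ : ℚ_[p]ˣ) : ℚ_[p])) =
        fun x : PadicAffine p => ((x.b : ℚ_[p]))⁻¹ := by
      funext x
      exact x.b.val_inv_eq_inv_val
    refine Continuous.prodMk ?_ ?_
    · show Continuous fun x : PadicAffine p => -(((x.b⁻¹ : ℚ_[p]ˣ) : ℚ_[p]) * x.a)
      rw [show (fun x : PadicAffine p => -(((x.b⁻¹ : ℚ_[p]ˣ) : ℚ_[p]) * x.a)) =
          fun x : PadicAffine p => -(((x.b : ℚ_[p]))⁻¹ * x.a) by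
        funext x; rw [x.b.val_inv_eq_inv_val]]
      exact (hb.mul continuous_aCoord).neg
    · show Continuous fun x : PadicAffine p => ((x.b⁻¹ : ℚ_[p]ˣ) : ℚ_[p])
      rw [hbinv]; exact hb

end PadicAffine

lemma PadicAffine.comm_of_comm_central {p : ℕ} [Fact p.Prime]
    (z x y : PadicAffine p) (hz : z ≠ 1) (hx : z * x = x * z) (hy : z * y = y * z) :
    x * y = y * x := by
  have hx1 : z.a + (z.b : ℚ_[p]) * x.a = x.a + (x.b : ℚ_[p]) * z.a := by
    have := congrArg PadicAffine.a hx; simpa using this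
  have hy1 : z.a + (z.b : ℚ_[p]) * y.a = y.a + (y.b : ℚ_[p]) * z.a := by
    have := congrArg PadicAffine.a hy; simpa using this
  ext
  · show x.a + (x.b : ℚ_[p]) * y.a = y.a + (y.b : ℚ_[p]) * x.a
    by_cases hB : (z.b : ℚ_[p]) = 1
    · have hA : z.a ≠ 0 := by
        intro hA0
        apply hz
        ext
        · exact hA0
        · show (z.b : ℚ_[p]) = ((1 : PadicAffine p).b : ℚ_[p])
          simpa using hB
      have hD : (x.b : ℚ_[p]) = 1 := by
        have h : z.a * ((x.b : ℚ_[p]) - 1) = 0 := by linear_combination -hx1 + x.a * hB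
        rcases mul_eq_zero.1 h with h | h
        · exact absurd h hA
        · exact sub_eq_zero.1 h
      have hF : (y.b : ℚ_[p]) = 1 := by
        have h : z.a * ((y.b : ℚ_[p]) - 1) = 0 := by linear_combination -hy1 + y.a * hB
        rcases mul_eq_zero.1 h with h | h
        · exact absurd h hA
        · exact sub_eq_zero.1 h
      rw [hD, hF]; ring
    · have h1 : x.a * ((z.b : ℚ_[p]) - 1) = z.a * ((x.b : ℚ_[p]) - 1) := by
        linear_combination hx1
      have h2 : y.a * ((z.b : ℚ_[p]) - 1) = z.a * ((y.b : ℚ_[p]) - 1) := by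
        linear_combination hy1
      have key : (x.a + (x.b : ℚ_[p]) * y.a) * ((z.b : ℚ_[p]) - 1)
          = (y.a + (y.b : ℚ_[p]) * x.a) * ((z.b : ℚ_[p]) - 1) := by
        linear_combination (1 - (y.b : ℚ_[p])) * h1 + ((x.b : ℚ_[p]) - 1) * h2
      exact mul_right_cancel₀ (sub_ne_zero.2 hB) key
  · simp [mul_comm]

/-- For every prime `p`, if `H` is a non-abelian subgroup of
`L = (ℚ_p, +) ⋊ ℚ_p^*`, then the center of `H` is trivial. -/
theorem center_of_nonabelian_subgroup_of_padicAffine_trivial (p : ℕ) [Fact p.Prime]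
    (H : Subgroup (PadicAffine p)) (hna : ¬ ∀ x y : ↥H, x * y = y * x) :
    Subgroup.center ↥H = ⊥ := by
  refine (Subgroup.eq_bot_iff_forall _).2 fun z hz => ?_
  by_contra hz1
  apply hna
  intro x y
  rw [Subgroup.mem_center_iff] at hz
  have hzv : (z : PadicAffine p) ≠ 1 := by
    intro h
    exact hz1 (Subtype.ext h)
  have hx : (z : PadicAffine p) * x = x * z := by
    have := hz x; exact_mod_cast congrArg Subtype.val this.symm
  have hy : (z : PadicAffine p) * y = y * z := by
    have := hz y; exact_mod_cast congrArg Subtype.val this.symm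
  exact Subtype.ext (PadicAffine.comm_of_comm_central _ _ _ hzv hx hy)
end

section
/- For every prime p, if H is a non-abelian subgroup of L = (ℚ_p, +) ⋊ ℚ_p^*, then H is essential in its closure: for every non-trivial closed normal subgroup N of the closure of H in L, the intersection N ∩ H is non-trivial. -/
namespace PadicAffine

variable {p : ℕ} [Fact p.Prime]

lemma mk_pow (u : ℚ_[p]) (n : ℕ) :
    (⟨u, 1⟩ : PadicAffine p) ^ n = ⟨(n : ℚ_[p]) * u, 1⟩ := by
  induction n with
  | zero => ext <;> simp
  | succ n ih =>
    rw [pow_succ, ih]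
    ext
    · simp only [mul_a, Units.val_one, Nat.cast_succ]; ring
    · simp

lemma comm_calc (t a : ℚ_[p]) (b : ℚ_[p]ˣ) :
    (⟨t, 1⟩ : PadicAffine p) * ⟨a, b⟩ * (⟨t, 1⟩ : PadicAffine p)⁻¹ *
      (⟨a, b⟩ : PadicAffine p)⁻¹ = ⟨(1 - (b : ℚ_[p])) * t, 1⟩ := by
  have hb : (b : ℚ_[p]) ≠ 0 := b.ne_zero
  ext
  · simp only [mul_a, mul_b, inv_a, inv_b, one_a, one_b, Units.val_one, Units.val_mul,
      Units.val_inv_eq_inv_val, mul_one, one_mul, inv_one]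
    field_simp
    ring
  · simp

end PadicAffine

/-- For every prime `p`, if `H` is a non-abelian subgroup of
`L = (ℚ_p, +) ⋊ ℚ_p^*`, then `H` is essential in its closure `H̄`: every non-trivial closed
normal subgroup `N` of `H̄` meets `H` non-trivially. -/
theorem nonabelian_subgroup_of_padicAffine_essential_in_closure (p : ℕ) [Fact p.Prime]
    (H : Subgroup (PadicAffine p)) (hna : ¬ ∀ x y : ↥H, x * y = y * x)
    (N : Subgroup ↥(H.topologicalClosure)) (hNnormal : N.Normal)
    (hNclosed : IsClosed (N : Set ↥(H.topologicalClosure))) (hNnontriv : N ≠ ⊥) :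
    ∃ x : ↥(H.topologicalClosure), x ∈ N ∧ (x : PadicAffine p) ∈ H ∧ x ≠ 1 := by
  classical
  
  -- the image of N in L
  set N₂ : Subgroup (PadicAffine p) := N.map H.topologicalClosure.subtype with hN₂
  have hN₂closed : IsClosed (N₂ : Set (PadicAffine p)) := by
    have h1 : IsClosed (H.topologicalClosure : Set (PadicAffine p)) := Subgroup.isClosed_topologicalClosure H
    have h2 : Topology.IsClosedEmbedding (Subtype.val : ↥H.topologicalClosure → PadicAffine p) :=
      Topology.IsClosedEmbedding.subtypeVal h1
    have : (N₂ : Set (PadicAffine p)) = Subtype.val '' (N : Set ↥H.topologicalClosure) := by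
      ext z; simp [hN₂, Subgroup.mem_map]
    rw [this]
    exact h2.isClosedMap _ hNclosed
  -- Step 1: a nontrivial "translation" in H
  push_neg at hna
  obtain ⟨x, y, hxy⟩ := hna
  set c : PadicAffine p := (x : PadicAffine p) * y * (x : PadicAffine p)⁻¹ * (y : PadicAffine p)⁻¹
    with hc
  have hcH : c ∈ H := by
    exact mul_mem (mul_mem (mul_mem x.2 y.2) (inv_mem x.2)) (inv_mem y.2)
  have hcb : c.b = 1 := by
    have : (x : PadicAffine p).b * (y : PadicAffine p).b * ((x : PadicAffine p).b)⁻¹ *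
        ((y : PadicAffine p).b)⁻¹ = 1 := by
      rw [mul_comm (x : PadicAffine p).b (y : PadicAffine p).b]
      group
    simpa [hc] using this
  have hcne : c ≠ 1 := by
    intro hc1
    apply hxy
    have : (x : PadicAffine p) * y = (y : PadicAffine p) * x := by
      have := hc1
      rw [hc] at this
      have h2 : (x : PadicAffine p) * y * ((x : PadicAffine p)⁻¹ * (y : PadicAffine p)⁻¹) = 1 := by
        rw [← mul_assoc]; exact this
      calc (x : PadicAffine p) * y
          = ((x : PadicAffine p) * y * ((x : PadicAffine p)⁻¹ * (y : PadicAffine p)⁻¹)) *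
            ((y : PadicAffine p) * x) := by group
        _ = (y : PadicAffine p) * x := by rw [h2, one_mul]
    exact Subtype.ext this
  set t : ℚ_[p] := c.a with ht
  have htne : t ≠ 0 := by
    intro h0
    exact hcne (PadicAffine.ext h0 hcb)
  have hmkt : (⟨t, 1⟩ : PadicAffine p) ∈ H := by
    have : c = ⟨t, 1⟩ := PadicAffine.ext rfl hcb
    rwa [← this]
  -- Step 2: a nontrivial element of N
  obtain ⟨n, hnN, hnne⟩ := (N.bot_or_exists_ne_one).resolve_left hNnontriv
  -- Step 3: produce s ≠ 0 with ⟨s, 1⟩ ∈ N₂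
  have key : ∃ s : ℚ_[p], s ≠ 0 ∧ (⟨s, 1⟩ : PadicAffine p) ∈ N₂ := by
    by_cases hb : ((n : PadicAffine p).b : ℚ_[p]) = 1
    · -- n itself is a translation
      refine ⟨(n : PadicAffine p).a, ?_, ?_⟩
      · intro h0
        apply hnne
        apply Subtype.ext
        exact PadicAffine.ext h0 (Units.ext (by simpa using hb))
      · have : (n : PadicAffine p) = ⟨(n : PadicAffine p).a, 1⟩ :=
          PadicAffine.ext rfl (Units.ext (by simpa using hb))
        rw [← this]
        exact ⟨n, hnN, rfl⟩
    · -- commutate with the translation ⟨t,1⟩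
      have hmem : (⟨t, 1⟩ : PadicAffine p) ∈ H.topologicalClosure := H.le_topologicalClosure hmkt
      set h : ↥H.topologicalClosure := ⟨⟨t, 1⟩, hmem⟩ with hh
      have hk : h * n * h⁻¹ * n⁻¹ ∈ N :=
        mul_mem (hNnormal.conj_mem n hnN h) (inv_mem hnN)
      refine ⟨(1 - ((n : PadicAffine p).b : ℚ_[p])) * t, ?_, ?_⟩
      · exact mul_ne_zero (sub_ne_zero.mpr fun h' => hb h'.symm) htne
      · refine ⟨h * n * h⁻¹ * n⁻¹, hk, ?_⟩
        show (h : PadicAffine p) * n * (h : PadicAffine p)⁻¹ * (n : PadicAffine p)⁻¹ = _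
        have hn' : (n : PadicAffine p) = ⟨(n : PadicAffine p).a, (n : PadicAffine p).b⟩ := rfl
        rw [hh]
        exact PadicAffine.comm_calc t (n : PadicAffine p).a (n : PadicAffine p).b
  obtain ⟨s, hsne, hsN⟩ := key
  -- Step 4-6: ℤ_p • s ⊆ N₂ (as translations)
  have hZp : ∀ w : ℤ_[p], (⟨(w : ℚ_[p]) * s, 1⟩ : PadicAffine p) ∈ N₂ := by
    have hg : Continuous fun w : ℤ_[p] => (⟨(w : ℚ_[p]) * s, 1⟩ : PadicAffine p) := by
      apply PadicAffine.isInducing_toProd.continuous_iff.2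
      exact Continuous.prodMk (continuous_subtype_val.mul continuous_const) continuous_const
    have hCclosed : IsClosed {w : ℤ_[p] |
        (⟨(w : ℚ_[p]) * s, 1⟩ : PadicAffine p) ∈ N₂} := hN₂closed.preimage hg
    have hnat : ∀ m : ℕ, (⟨(m : ℚ_[p]) * s, 1⟩ : PadicAffine p) ∈ N₂ := by
      intro m
      have := pow_mem hsN m
      rwa [PadicAffine.mk_pow] at this
    intro w
    have hsub : Set.range (Nat.cast : ℕ → ℤ_[p]) ⊆ {w : ℤ_[p] |
        (⟨(w : ℚ_[p]) * s, 1⟩ : PadicAffine p) ∈ N₂} := by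
      rintro _ ⟨m, rfl⟩
      simpa using hnat m
    have hw : w ∈ closure (Set.range (Nat.cast : ℕ → ℤ_[p])) :=
      PadicInt.denseRange_natCast w
    exact (closure_minimal hsub hCclosed) hw
  -- Step 7: choose m with ‖p^m * t‖ ≤ ‖s‖
  have hp1 : ‖(p : ℚ_[p])‖ < 1 := by
    rw [Padic.norm_p]
    have := (Fact.out : p.Prime).one_lt
    rw [inv_lt_one_iff₀]
    right
    exact_mod_cast this
  obtain ⟨m, hm⟩ := exists_pow_lt_of_lt_one
    (div_pos (norm_pos_iff.mpr hsne) (norm_pos_iff.mpr htne)) hp1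
  have hnorm : ‖(p : ℚ_[p]) ^ m * t‖ ≤ ‖s‖ := by
    rw [norm_mul, norm_pow]
    calc ‖(p : ℚ_[p])‖ ^ m * ‖t‖ ≤ (‖s‖ / ‖t‖) * ‖t‖ := by
          apply mul_le_mul_of_nonneg_right hm.le (norm_nonneg t)
      _ = ‖s‖ := div_mul_cancel₀ _ (norm_ne_zero_iff.mpr htne)
  set u : ℚ_[p] := (p : ℚ_[p]) ^ m * t with hu
  have hune : u ≠ 0 := mul_ne_zero (pow_ne_zero m (by
    exact_mod_cast (Fact.out : p.Prime).ne_zero)) htne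
  -- u = z * s with z ∈ ℤ_p
  have hz1 : ‖u / s‖ ≤ 1 := by
    rw [norm_div, div_le_one (norm_pos_iff.mpr hsne)]
    exact hnorm
  have huN₂ : (⟨u, 1⟩ : PadicAffine p) ∈ N₂ := by
    have := hZp ⟨u / s, hz1⟩
    have heq : (u / s) * s = u := div_mul_cancel₀ u hsne
    simpa [heq] using this
  have huH : (⟨u, 1⟩ : PadicAffine p) ∈ H := by
    have := pow_mem hmkt (p ^ m)
    rw [PadicAffine.mk_pow] at this
    simpa [hu] using this
  -- Conclude
  obtain ⟨w, hwN, hwval⟩ := huN₂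
  have hwval' : (w : PadicAffine p) = ⟨u, 1⟩ := hwval
  refine ⟨w, hwN, ?_, ?_⟩
  · rw [hwval']; exact huH
  · intro h1
    rw [h1] at hwval'
    have : (0 : ℚ_[p]) = u := congrArg PadicAffine.a hwval'
    exact hune this.symm
end

section
/- For every prime p, if H is a non-abelian subgroup of L = (ℚ_p, +) ⋊ ℚ_p^* whose closure in L is compact, then H (with the subspace topology) is a minimal topological group. -/
/-- A Hausdorff topological group `(G, τ)` is *minimal* if every Hausdorff group topology `σ`
on `G` that is coarser than `τ` coincides with `τ`. -/
def IsMinimalGroupTopology (G : Type*) [Group G] [τ : TopologicalSpace G] : Prop :=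
  ∀ σ : TopologicalSpace G, @IsTopologicalGroup G σ _ → @T2Space G σ →
    (∀ s : Set G, @IsOpen G σ s → @IsOpen G τ s) → σ = τ

open Topology Filter

section AuxGroup

variable {G : Type*} [Group G] [TopologicalSpace G] [IsTopologicalGroup G]

lemma aux_split {U : Set G} (hU : U ∈ 𝓝 (1 : G)) :
    ∃ V ∈ 𝓝 (1 : G), ∀ a ∈ V, ∀ b ∈ V, a * b ∈ U :=
  exists_nhds_one_split hU

lemma aux_inv {U : Set G} (hU : U ∈ 𝓝 (1 : G)) :
    ∃ V ∈ 𝓝 (1 : G), ∀ a ∈ V, a⁻¹ ∈ U := by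
  have h : Filter.Tendsto (fun x : G => x⁻¹) (𝓝 1) (𝓝 1) := by
    simpa using (continuous_inv (G := G)).tendsto (1 : G)
  exact ⟨_, h hU, fun a ha => ha⟩

lemma aux_conj (h : G) {U : Set G} (hU : U ∈ 𝓝 (1 : G)) :
    ∃ V ∈ 𝓝 (1 : G), ∀ x ∈ V, h * x * h⁻¹ ∈ U := by
  have hc : Continuous fun x : G => h * x * h⁻¹ :=
    (continuous_const.mul continuous_id).mul continuous_const
  have h1 : Filter.Tendsto (fun x : G => h * x * h⁻¹) (𝓝 1) (𝓝 1) := by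
    simpa using hc.tendsto (1 : G)
  exact ⟨_, h1 hU, fun a ha => ha⟩

lemma aux_sep [T2Space G] {g : G} (hg : g ≠ 1) :
    ∃ U ∈ 𝓝 (1 : G), g ∉ closure U := by
  have hmem : ({g}ᶜ : Set G) ∈ 𝓝 (1 : G) :=
    (isOpen_compl_singleton).mem_nhds (by simpa using hg.symm)
  obtain ⟨t, ht, htc, hts⟩ := exists_mem_nhds_isClosed_subset hmem
  refine ⟨t, ht, fun hx => ?_⟩
  have : g ∈ t := by rwa [htc.closure_eq] at hx
  exact hts this rfl

end AuxGroup

open Topology in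
lemma aux_sep2 {G X : Type*} [Group G] (τ σ : TopologicalSpace G) [TopologicalSpace X]
    (hle : τ ≤ σ) (hσg : @IsTopologicalGroup G σ _) (hσ2 : @T2Space G σ)
    (f : G → X) (hf : @Topology.IsInducing G X τ _ f)
    {g : G} (hgne : g ≠ 1) :
    ∃ U ∈ @nhds G σ 1, f g ∉ closure (f '' U) := by
  have heq : ∀ U : Set G, @closure G τ U = f ⁻¹' closure (f '' U) := by
    intro U
    letI := τ
    exact hf.closure_eq_preimage_closure_image U
  letI := σ
  obtain ⟨U, hU, hcl⟩ := aux_sep hgne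
  refine ⟨U, hU, fun hmem => hcl (closure.mono hle ?_)⟩
  rw [heq]
  exact hmem


open Topology Filter Set in
lemma padicAffine_key (p : ℕ) [Fact p.Prime] (H : Subgroup (PadicAffine p))
    (hna : ¬ ∀ x y : ↥H, x * y = y * x)
    (hpc : IsCompact (closure (H : Set (PadicAffine p))))
    (F : Filter ↥H)
    (hFone : ∀ U ∈ F, (1 : ↥H) ∈ U)
    (hFsplit : ∀ U ∈ F, ∃ V ∈ F, ∀ a ∈ V, ∀ b ∈ V, a * b ∈ U)
    (hFinv : ∀ U ∈ F, ∃ V ∈ F, ∀ a ∈ V, a⁻¹ ∈ U)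
    (hFconj : ∀ h : ↥H, ∀ U ∈ F, ∃ V ∈ F, ∀ a ∈ V, h * a * h⁻¹ ∈ U)
    (hFsep : ∀ h : ↥H, h ≠ 1 → ∃ U ∈ F, (h : PadicAffine p) ∉ closure (Subtype.val '' U)) :
    ∀ V ∈ 𝓝 (1 : ↥H), V ∈ F := by
  classical
  set i : ↥H → (PadicAffine p) := Subtype.val with hi
  have hi_inj : Function.Injective i := Subtype.val_injective
  set N : Set (PadicAffine p) := ⋂ U ∈ F, closure (i '' U) with hN
  have hNmem : ∀ x : (PadicAffine p), x ∈ N ↔ ∀ U ∈ F, x ∈ closure (i '' U) := fun x => Set.mem_iInter₂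
  -- N is closed
  have hNclosed : IsClosed N := isClosed_biInter fun U hU => isClosed_closure
  -- N contains 1
  have hNone : (1 : PadicAffine p) ∈ N := (hNmem 1).2 fun U hU =>
    subset_closure ⟨1, hFone U hU, rfl⟩
  -- N closed under multiplication
  have hNmul : ∀ x ∈ N, ∀ y ∈ N, x * y ∈ N := by
    intro x hx y hy
    rw [hNmem] at hx hy ⊢
    intro U hU
    obtain ⟨V, hV, hVU⟩ := hFsplit U hU
    have hprod : (x, y) ∈ closure ((i '' V) ×ˢ (i '' V)) := by
      rw [closure_prod_eq]; exact ⟨hx V hV, hy V hV⟩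
    have himg := image_closure_subset_closure_image
      (f := fun q : (PadicAffine p) × (PadicAffine p) => q.1 * q.2) (s := (i '' V) ×ˢ (i '' V)) continuous_mul
    have hxy : x * y ∈ closure ((fun q : (PadicAffine p) × (PadicAffine p) => q.1 * q.2) '' ((i '' V) ×ˢ (i '' V))) :=
      himg ⟨(x, y), hprod, rfl⟩
    refine closure_mono ?_ hxy
    rintro _ ⟨⟨u, v⟩, ⟨⟨u', hu', rfl⟩, ⟨v', hv', rfl⟩⟩, rfl⟩
    exact ⟨u' * v', hVU _ hu' _ hv', rfl⟩
  -- N closed under inverse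
  have hNinv : ∀ x ∈ N, x⁻¹ ∈ N := by
    intro x hx
    rw [hNmem] at hx ⊢
    intro U hU
    obtain ⟨V, hV, hVU⟩ := hFinv U hU
    have himg := image_closure_subset_closure_image
      (f := fun q : (PadicAffine p) => q⁻¹) (s := i '' V) continuous_inv
    have hx' : x⁻¹ ∈ closure ((fun q : (PadicAffine p) => q⁻¹) '' (i '' V)) := himg ⟨x, hx V hV, rfl⟩
    refine closure_mono ?_ hx'
    rintro _ ⟨_, ⟨u', hu', rfl⟩, rfl⟩
    exact ⟨u'⁻¹, hVU _ hu', rfl⟩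
  -- N stable under conjugation by elements of H
  have hNconj : ∀ h : ↥H, ∀ x ∈ N, i h * x * (i h)⁻¹ ∈ N := by
    intro h x hx
    rw [hNmem] at hx ⊢
    intro U hU
    obtain ⟨V, hV, hVU⟩ := hFconj h U hU
    have hc : Continuous fun q : (PadicAffine p) => i h * q * (i h)⁻¹ :=
      (continuous_const.mul continuous_id).mul continuous_const
    have himg := image_closure_subset_closure_image
      (f := fun q : (PadicAffine p) => i h * q * (i h)⁻¹) (s := i '' V) hc
    have hx' : i h * x * (i h)⁻¹ ∈ closure ((fun q : (PadicAffine p) => i h * q * (i h)⁻¹) '' (i '' V)) :=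
      himg ⟨x, hx V hV, rfl⟩
    refine closure_mono ?_ hx'
    rintro _ ⟨_, ⟨u', hu', rfl⟩, rfl⟩
    exact ⟨h * u' * h⁻¹, hVU _ hu', rfl⟩
  have hNpow : ∀ x ∈ N, ∀ n : ℕ, x ^ n ∈ N := by
    intro x hx n
    induction n with
    | zero => simpa using hNone
    | succ n ih => rw [pow_succ]; exact hNmul _ ih _ hx
  -- the key triviality claim
  have hN1 : ∀ x ∈ N, x = 1 := by
    have hPne : (p : ℚ_[p]) ≠ 0 := Nat.cast_ne_zero.2 (Fact.out : p.Prime).ne_zero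
    push_neg at hna
    obtain ⟨a, b, hab⟩ := hna
    set h₀ : ↥H := a * b * a⁻¹ * b⁻¹ with hh₀def
    have hh₀ : h₀ ≠ 1 := by
      intro h
      apply hab
      have h' : (a * b) * (b * a)⁻¹ = 1 := by
        rw [mul_inv_rev]
        simpa [hh₀def, mul_assoc] using h
      exact mul_inv_eq_one.1 h'
    have hib : (i h₀).b = 1 := by
      show ((a : (PadicAffine p)) * (b : (PadicAffine p)) * (a : (PadicAffine p))⁻¹ * (b : (PadicAffine p))⁻¹).b = 1
      simp only [PadicAffine.mul_b, PadicAffine.inv_b]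
      rw [mul_comm (a : (PadicAffine p)).b (b : (PadicAffine p)).b]
      group
    have hc₀ : (i h₀).a ≠ 0 := by
      intro h
      apply hh₀
      apply hi_inj
      show i h₀ = i 1
      have h1 : i (1 : ↥H) = (1 : PadicAffine p) := rfl
      rw [h1]
      exact PadicAffine.ext (by simpa using h) (by simpa using hib)
    set c₀ : ℚ_[p] := (i h₀).a with hc₀def
    intro x hx
    by_contra hxne
    have hmain : ∃ m ∈ N, m.b = 1 ∧ m.a ≠ 0 := by
      by_cases hxb : x.b = 1
      · exact ⟨x, hx, hxb, fun h => hxne (PadicAffine.ext (by simpa using h) (by simpa using hxb))⟩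
      · refine ⟨i h₀ * x * (i h₀)⁻¹ * x⁻¹, hNmul _ (hNconj h₀ x hx) _ (hNinv x hx), ?_, ?_⟩
        · simp only [PadicAffine.mul_b, PadicAffine.inv_b, hib]
          rw [mul_comm (1 : ℚ_[p]ˣ) x.b]
          group
        · have hval : (i h₀ * x * (i h₀)⁻¹ * x⁻¹).a = (1 - (x.b : ℚ_[p])) * c₀ := by
            simp only [PadicAffine.mul_a, PadicAffine.mul_b, PadicAffine.inv_a,
              PadicAffine.inv_b, hib, Units.val_inv_eq_inv_val, Units.val_one, one_mul,
              inv_one, Units.val_mul, ← hc₀def]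
            field_simp
            ring
          rw [hval]
          refine mul_ne_zero (sub_ne_zero.2 ?_) hc₀
          intro h
          exact hxb (Units.ext (by simpa using h.symm))
    obtain ⟨m, hmN, hmb, hma⟩ := hmain
    set z := m.a with hzdef
    set j : ℚ_[p] → (PadicAffine p) := fun t => ⟨t, 1⟩ with hjdef
    have hjm : ∀ s t : ℚ_[p], j s * j t = j (s + t) := by
      intro s t
      refine PadicAffine.ext ?_ ?_ <;> simp [hjdef]
    have hjz : j z ∈ N := by
      have hmz : m = j z := PadicAffine.ext rfl hmb
      rwa [← hmz]
    have hjpow : ∀ (t : ℚ_[p]) (n : ℕ), (j t) ^ n = j ((n : ℚ_[p]) * t) := by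
      intro t n
      induction n with
      | zero => refine PadicAffine.ext ?_ ?_ <;> simp [hjdef]
      | succ n ih =>
        rw [pow_succ, ih, hjm]
        refine PadicAffine.ext ?_ ?_
        · simp [hjdef]; push_cast; ring
        · simp [hjdef]
    have hjc : Continuous j :=
      PadicAffine.isInducing_toProd.continuous_iff.2 (continuous_id.prodMk continuous_const)
    have hcoe : Continuous ((↑) : ℤ_[p] → ℚ_[p]) := Isometry.continuous fun x y => rfl
    have hzint : ∀ u : ℤ_[p], j (z * (u : ℚ_[p])) ∈ N := by
      have hCc : IsClosed {u : ℤ_[p] | j (z * (u : ℚ_[p])) ∈ N} :=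
        hNclosed.preimage (hjc.comp (continuous_const.mul hcoe))
      have hnat : ∀ n : ℕ, (n : ℤ_[p]) ∈ {u : ℤ_[p] | j (z * (u : ℚ_[p])) ∈ N} := by
        intro n
        have heq : j (z * ((n : ℤ_[p]) : ℚ_[p])) = (j z) ^ n := by
          rw [hjpow]; congr 1; push_cast; ring
        simp only [Set.mem_setOf_eq, heq]
        exact hNpow _ hjz n
      intro u
      have hsub : Set.range (Nat.cast : ℕ → ℤ_[p]) ⊆ {u : ℤ_[p] | j (z * (u : ℚ_[p])) ∈ N} := by
        rintro _ ⟨n, rfl⟩; exact hnat n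
      exact closure_minimal hsub hCc (PadicInt.denseRange_natCast u)
    obtain ⟨n, hn⟩ := exists_pow_lt_of_lt_one
      (div_pos (norm_pos_iff.2 hma) (norm_pos_iff.2 hc₀)) (Padic.norm_p_lt_one (p := p))
    have hu : ‖(p : ℚ_[p]) ^ n * c₀ / z‖ ≤ 1 := by
      rw [norm_div, norm_mul, norm_pow, div_le_one (norm_pos_iff.2 hma)]
      have := mul_lt_mul_of_pos_right hn (norm_pos_iff.2 hc₀)
      rw [div_mul_cancel₀ _ (norm_ne_zero_iff.2 hc₀)] at this
      exact this.le
    set u₀ : ℤ_[p] := ⟨(p : ℚ_[p]) ^ n * c₀ / z, hu⟩ with hu₀def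
    have hmemN : j ((p : ℚ_[p]) ^ n * c₀) ∈ N := by
      have h1 := hzint u₀
      rw [show z * (u₀ : ℚ_[p]) = (p : ℚ_[p]) ^ n * c₀ by
        show z * ((p : ℚ_[p]) ^ n * c₀ / z) = _
        field_simp] at h1
      exact h1
    set h₁ : ↥H := h₀ ^ (p ^ n) with hh₁def
    have hih₁ : i h₁ = j ((p : ℚ_[p]) ^ n * c₀) := by
      have h2 : i h₁ = (i h₀) ^ (p ^ n) := rfl
      have h3 : i h₀ = j c₀ := PadicAffine.ext rfl hib
      rw [h2, h3, hjpow]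
      congr 1
      push_cast; ring
    have hne1 : h₁ ≠ 1 := by
      intro h
      have h4 : i h₁ = (1 : PadicAffine p) := by rw [h]; rfl
      rw [hih₁] at h4
      have h5 := congrArg PadicAffine.a h4
      simp only [hjdef, PadicAffine.one_a] at h5
      exact absurd h5 (mul_ne_zero (pow_ne_zero _ hPne) hc₀)
    obtain ⟨U, hU, hnotin⟩ := hFsep h₁ hne1
    apply hnotin
    rw [hih₁]
    exact (hNmem _).1 hmemN U hU
  -- conclusion via compactness
  intro V hV
  have hV' : V ∈ Filter.comap i (𝓝 (i (1 : ↥H))) := by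
    rw [← nhds_induced]; exact hV
  obtain ⟨W', hW', hWV⟩ := Filter.mem_comap.1 hV'
  have hW'1 : W' ∈ 𝓝 (1 : PadicAffine p) := by simpa [hi] using hW'
  set W : Set (PadicAffine p) := interior W' with hW
  have h1W : (1 : PadicAffine p) ∈ W := mem_interior_iff_mem_nhds.2 hW'1
  set Z : {U : Set ↥H // U ∈ F} → Set (PadicAffine p) := fun U => closure (i '' U.1) ∩ Wᶜ with hZ
  have hZc : ∀ U, IsClosed (Z U) := fun U =>
    isClosed_closure.inter (isClosed_compl_iff.2 isOpen_interior)
  have hempty : closure (H : Set (PadicAffine p)) ∩ ⋂ U, Z U = ∅ := by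
    rw [Set.eq_empty_iff_forall_notMem]
    rintro g ⟨hgs, hgZ⟩
    rw [Set.mem_iInter] at hgZ
    have hgN : g ∈ N := (hNmem g).2 fun U hU => ((hgZ ⟨U, hU⟩).1)
    have hgW : g ∉ W := (hgZ ⟨Set.univ, Filter.univ_mem⟩).2
    exact hgW (hN1 g hgN ▸ h1W)
  obtain ⟨t, ht⟩ := hpc.elim_finite_subfamily_closed Z hZc hempty
  have hU₀ : (⋂ U ∈ t, (U : {U : Set ↥H // U ∈ F}).1) ∈ F :=
    (Filter.biInter_finset_mem t).2 fun U _ => U.2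
  refine Filter.mem_of_superset hU₀ ?_
  intro a ha
  rw [Set.mem_iInter₂] at ha
  have hiaW : i a ∈ W := by
    by_contra hnotW
    have hmem : i a ∈ closure (H : Set (PadicAffine p)) ∩ ⋂ U ∈ t, Z U := by
      refine ⟨subset_closure a.2, ?_⟩
      rw [Set.mem_iInter₂]
      exact fun U hUt => ⟨subset_closure ⟨a, ha U hUt, rfl⟩, hnotW⟩
    rw [ht] at hmem
    exact hmem
  have : i a ∈ W' := interior_subset hiaW
  exact hWV this


/-- For every prime `p`, if `H` is a non-abelian subgroup of
`L = (ℚ_p, +) ⋊ ℚ_p^*` whose closure in `L` is compact, then `H` (with the subspace topology)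
is a minimal topological group. -/
theorem precompact_nonabelian_subgroup_of_padicAffine_minimal (p : ℕ) [Fact p.Prime]
    (H : Subgroup (PadicAffine p)) (hna : ¬ ∀ x y : ↥H, x * y = y * x)
    (hpc : IsCompact (closure (H : Set (PadicAffine p)))) :
    IsMinimalGroupTopology ↥H := by
  intro σ hg hT2 hco
  have hle : (instTopologicalSpaceSubtype : TopologicalSpace ↥H) ≤ σ := fun s hs => hco s hs
  have hsep : ∀ h : ↥H, h ≠ 1 →
      ∃ U ∈ @nhds ↥H σ 1, (h : PadicAffine p) ∉ closure (Subtype.val '' U) :=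
    fun h hne => aux_sep2 instTopologicalSpaceSubtype σ hle hg hT2 Subtype.val
      (Topology.IsInducing.subtypeVal (t := (H : Set (PadicAffine p)))) hne
  have hkey := padicAffine_key p H hna hpc (@nhds ↥H σ 1)
    (fun U hU => mem_of_mem_nhds hU)
    (fun U hU => aux_split hU)
    (fun U hU => aux_inv hU)
    (fun h U hU => aux_conj h hU)
    hsep
  refine IsTopologicalGroup.ext hg
    (inferInstance : @IsTopologicalGroup ↥H instTopologicalSpaceSubtype _) ?_
  exact le_antisymm (fun V hV => hkey V hV) (nhds_mono hle)
end

section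
/- Let G be an infinite profinite group (a compact, totally disconnected Hausdorff topological group) having no non-trivial finite normal subgroups. If H is a dense subgroup of G that is locally minimal in the subspace topology, then H is minimal. -/
set_option linter.unusedSectionVars false
set_option linter.unusedVariables false

open Set Filter Topology

/-- A Hausdorff topological group `(G, τ)` is *locally minimal* if there is a `τ`-neighborhood
`V` of the identity such that every Hausdorff group topology `σ ⊆ τ` with `V ∈ σ` equals `τ`. -/
def IsLocallyMinimalGroupTopology (G : Type*) [Group G] [τ : TopologicalSpace G] : Prop :=
  ∃ V ∈ @nhds G τ 1, ∀ σ : TopologicalSpace G, @IsTopologicalGroup G σ _ → @T2Space G σ →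
    (∀ s : Set G, @IsOpen G σ s → @IsOpen G τ s) → V ∈ @nhds G σ 1 → σ = τ

/-- The topology induced by a function into a topological space. -/
abbrev inducedTop {A B : Type*} [TopologicalSpace B] (f : A → B) : TopologicalSpace A :=
  TopologicalSpace.induced f inferInstance

section Aux
variable {G : Type*} [Group G] [TopologicalSpace G] [IsTopologicalGroup G] [T2Space G]
    [CompactSpace G] [TotallyDisconnectedSpace G]

theorem aux_essential
    (hnfn : ∀ N : Subgroup G, N.Normal → (N : Set G).Finite → N = ⊥)
    (H : Subgroup G) (hdense : Dense (H : Set G))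
    (hlm : IsLocallyMinimalGroupTopology ↥H)
    (N : Subgroup G) (hNnorm : N.Normal) (hNcl : IsClosed (N : Set G))
    (hNH : ∀ h : ↥H, (h : G) ∈ N → h = 1) : N = ⊥ := by
  obtain ⟨V, hV, hVmin⟩ := hlm
  have hVc : V ∈ comap (Subtype.val : ↥H → G) (𝓝 (1 : G)) := by
    have h1 : (𝓝 (1 : ↥H)) = comap (Subtype.val : ↥H → G) (𝓝 ((1 : ↥H) : G)) :=
      nhds_induced _ _
    rw [h1] at hV
    simpa using hV
  obtain ⟨O, hO, hOV⟩ := mem_comap.mp hVc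
  obtain ⟨O₁, hO₁sub, hO₁open, h1O₁⟩ := mem_nhds_iff.mp hO
  obtain ⟨C, hCclopen, h1C, hCsub⟩ := compact_exists_isClopen_in_isOpen hO₁open h1O₁
  obtain ⟨W, hWsub⟩ :=
    IsTopologicalGroup.exist_openNormalSubgroup_sub_clopen_nhds_of_one hCclopen h1C
  have hWV : ∀ h : ↥H, (h : G) ∈ (W : Subgroup G) → h ∈ V := fun h hh =>
    hOV (hO₁sub (hCsub (hWsub hh)))
  -- the intersection N ⊓ W
  set N' : Subgroup G := N ⊓ (W : Subgroup G) with hN'def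
  haveI hN'norm : N'.Normal := by
    constructor
    intro n hn g
    obtain ⟨hn1, hn2⟩ := Subgroup.mem_inf.mp hn
    exact Subgroup.mem_inf.mpr ⟨hNnorm.conj_mem n hn1 g,
      (W.isNormal').conj_mem n hn2 g⟩
  haveI hN'cl : IsClosed (N' : Set G) := by
    have hWcl : IsClosed ((W : Subgroup G) : Set G) :=
      Subgroup.isClosed_of_isOpen _ W.isOpen
    rw [hN'def, Subgroup.coe_inf]
    exact hNcl.inter hWcl
  set φ : ↥H →* G ⧸ N' := (QuotientGroup.mk' N').comp H.subtype with hφdef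
  have hφinj : Function.Injective ⇑φ := by
    intro a b hab
    obtain ⟨z, hz, hza⟩ := (QuotientGroup.mk'_eq_mk' N').mp hab
    have hzN : z ∈ N := (Subgroup.mem_inf.mp hz).1
    have hza' : (a : G) * z = (b : G) := hza
    have hzH : z = ((a⁻¹ * b : ↥H) : G) := by
      push_cast
      rw [← hza']
      group
    have hone : (a⁻¹ * b : ↥H) = 1 := hNH _ (by rw [← hzH]; exact hzN)
    exact inv_mul_eq_one.mp hone
  have hσ'grp : @IsTopologicalGroup ↥H (inducedTop ⇑φ) _ := topologicalGroup_induced φ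
  have hσ'T2 : @T2Space ↥H (inducedTop ⇑φ) := by
    have hemb : @Topology.IsEmbedding ↥H (G ⧸ N') (inducedTop ⇑φ) _ ⇑φ :=
      Topology.IsEmbedding.induced hφinj
    exact @Topology.IsEmbedding.t2Space _ _ (inducedTop ⇑φ) _ _ _ hemb
  have hφcont : Continuous ⇑φ :=
    (QuotientGroup.continuous_mk.comp continuous_subtype_val : _)
  have hσ'le : ∀ s : Set ↥H, @IsOpen ↥H (inducedTop ⇑φ) s → IsOpen s := by
    intro s hs
    obtain ⟨t, ht, rfl⟩ := isOpen_induced_iff.mp hs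
    exact ht.preimage hφcont
  have hVσ' : V ∈ @nhds ↥H (inducedTop ⇑φ) 1 := by
    have h1 : @nhds ↥H (inducedTop ⇑φ) 1 = comap (⇑φ) (𝓝 (φ 1)) := nhds_induced _ _
    rw [h1]
    refine mem_comap.mpr ⟨QuotientGroup.mk (s := N') '' ((W : Subgroup G) : Set G), ?_, ?_⟩
    · have hopen : IsOpen (QuotientGroup.mk (s := N') '' ((W : Subgroup G) : Set G)) :=
        QuotientGroup.isOpenMap_coe _ W.isOpen
      have h1mem : φ 1 ∈ QuotientGroup.mk (s := N') '' ((W : Subgroup G) : Set G) := by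
        refine ⟨1, one_mem _, ?_⟩
        simp
      exact hopen.mem_nhds h1mem
    · rintro h ⟨w, hw, hwh⟩
      have hwh' : QuotientGroup.mk' N' w = QuotientGroup.mk' N' (h : G) := hwh
      obtain ⟨z, hz, hzw⟩ := (QuotientGroup.mk'_eq_mk' N').mp hwh'
      have hzW : z ∈ (W : Subgroup G) := (Subgroup.mem_inf.mp hz).2
      have hhW : (h : G) ∈ (W : Subgroup G) := by
        rw [← hzw]; exact mul_mem hw hzW
      exact hWV h hhW
  have hEq : inducedTop ⇑φ = _ := hVmin _ hσ'grp hσ'T2 hσ'le hVσ'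
  -- N' is trivial
  have hN'bot : N' = ⊥ := by
    rw [Subgroup.eq_bot_iff_forall]
    intro n hn
    by_contra hne
    have hmem : ∀ U ∈ 𝓝 (1 : G), n ∈ closure U := by
      intro U hU
      have hA : (Subtype.val ⁻¹' U : Set ↥H) ∈ 𝓝 (1 : ↥H) :=
        continuous_subtype_val.continuousAt.preimage_mem_nhds (by simpa using hU)
      rw [← hEq] at hA
      have hA' : (Subtype.val ⁻¹' U : Set ↥H) ∈ comap (⇑φ) (𝓝 (φ 1)) := by
        rwa [nhds_induced] at hA
      obtain ⟨S, hS, hSsub⟩ := mem_comap.mp hA'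
      have hP : ((⇑(QuotientGroup.mk' N') ⁻¹' S : Set G)) ∈ 𝓝 n := by
        refine (QuotientGroup.continuous_mk).continuousAt.preimage_mem_nhds ?_
        have hπn : (QuotientGroup.mk' N') n = 1 := (QuotientGroup.eq_one_iff n).mpr hn
        have hφ1 : φ 1 = 1 := map_one φ
        rw [show ((n : G) : G ⧸ N') = φ 1 by rw [hφ1]; exact hπn]
        exact hS
      rw [mem_closure_iff_nhds]
      intro Q hQ
      have hQP : Q ∩ (⇑(QuotientGroup.mk' N') ⁻¹' S) ∈ 𝓝 n := inter_mem hQ hP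
      obtain ⟨x, hxH, hxQP⟩ := hdense.exists_mem_open isOpen_interior
        ⟨n, mem_interior_iff_mem_nhds.mpr hQP⟩
      have hxQ : x ∈ Q := (interior_subset hxQP).1
      have hxS : QuotientGroup.mk' N' x ∈ S := (interior_subset hxQP).2
      have hxU : x ∈ U := by
        have : (⟨x, hxH⟩ : ↥H) ∈ (⇑φ) ⁻¹' S := hxS
        exact hSsub this
      exact ⟨x, hxQ, hxU⟩
    have h1ne : (1 : G) ≠ n := fun e => hne e.symm
    obtain ⟨Cc, hCc, hCccl, hCcsub⟩ :=
      exists_mem_nhds_isClosed_subset (compl_singleton_mem_nhds h1ne)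
    have := hmem Cc hCc
    rw [hCccl.closure_eq] at this
    exact hCcsub this rfl
  -- N is finite, hence trivial
  haveI hdisc : DiscreteTopology ↥N := by
    apply discreteTopology_of_isOpen_singleton_one
    have hset : ({1} : Set ↥N) = (Subtype.val : ↥N → G) ⁻¹' ((W : Subgroup G) : Set G) := by
      ext x
      simp only [mem_singleton_iff, mem_preimage, SetLike.mem_coe]
      constructor
      · rintro rfl; exact one_mem _
      · intro hxW
        have hxN' : (x : G) ∈ N' := Subgroup.mem_inf.mpr ⟨x.2, hxW⟩
        rw [hN'bot, Subgroup.mem_bot] at hxN'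
        exact Subtype.ext hxN'
    rw [hset]
    exact W.isOpen.preimage continuous_subtype_val
  haveI : CompactSpace ↥N := isCompact_iff_compactSpace.mp hNcl.isCompact
  have hfin : (N : Set G).Finite := Set.finite_coe_iff.mp finite_of_compact_of_discrete
  exact hnfn N hNnorm hfin

/-- The intersection of the `G`-closures of all `σ`-neighborhoods of `1` in `H`. -/
def sigmaCore (H : Subgroup G) (σ : TopologicalSpace ↥H)
    (hσ : @IsTopologicalGroup ↥H σ _) : Subgroup G where
  carrier := ⋂ U ∈ @nhds ↥H σ 1, closure (Subtype.val '' U)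
  one_mem' := by
    letI := σ
    exact mem_iInter₂.mpr fun U hU => subset_closure ⟨1, mem_of_mem_nhds hU, rfl⟩
  mul_mem' := by
    intro a b ha hb
    refine mem_iInter₂.mpr fun U hU => ?_
    letI := σ; haveI := hσ
    obtain ⟨U', hU', hsplit⟩ := exists_nhds_one_split hU
    have ha' := mem_iInter₂.mp ha U' hU'
    have hb' := mem_iInter₂.mp hb U' hU'
    refine map_mem_closure₂ continuous_mul ha' hb' ?_
    rintro x ⟨u, hu, rfl⟩ y ⟨v, hv, rfl⟩
    exact ⟨u * v, hsplit u hu v hv, rfl⟩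
  inv_mem' := by
    intro a ha
    refine mem_iInter₂.mpr fun U hU => ?_
    letI := σ; haveI := hσ
    have hU' : (fun y : ↥H => y⁻¹) ⁻¹' U ∈ 𝓝 (1 : ↥H) :=
      continuous_inv.continuousAt.preimage_mem_nhds (by simpa using hU)
    have ha' := mem_iInter₂.mp ha _ hU'
    refine map_mem_closure (continuous_inv : Continuous fun g : G => g⁻¹) ha' ?_
    rintro x ⟨u, hu, rfl⟩
    exact ⟨u⁻¹, hu, rfl⟩

theorem mem_sigmaCore {H : Subgroup G} {σ : TopologicalSpace ↥H}
    {hσ : @IsTopologicalGroup ↥H σ _} {x : G} :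
    x ∈ sigmaCore H σ hσ ↔ ∀ U ∈ @nhds ↥H σ 1, x ∈ closure (Subtype.val '' U) :=
  mem_iInter₂

theorem sigmaCore_closed {H : Subgroup G} {σ : TopologicalSpace ↥H}
    {hσ : @IsTopologicalGroup ↥H σ _} : IsClosed ((sigmaCore H σ hσ : Subgroup G) : Set G) :=
  isClosed_biInter fun U _ => isClosed_closure

theorem sigmaCore_normal {H : Subgroup G} (hdense : Dense (H : Set G))
    {σ : TopologicalSpace ↥H} (hσ : @IsTopologicalGroup ↥H σ _) :
    (sigmaCore H σ hσ).Normal := by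
  set K := sigmaCore H σ hσ with hKdef
  have hKcl : IsClosed (K : Set G) := sigmaCore_closed
  set S : Set G := ⋂ x ∈ (K : Set G), (fun g : G => g * x * g⁻¹) ⁻¹' (K : Set G) with hSdef
  have hScl : IsClosed S := isClosed_biInter fun x _ =>
    hKcl.preimage (by fun_prop)
  have hHS : (H : Set G) ⊆ S := by
    intro g' hg'
    set h : ↥H := ⟨g', hg'⟩ with hhdef
    refine mem_iInter₂.mpr fun y hy => ?_
    refine mem_sigmaCore.mpr fun U hU => ?_
    letI := σ; haveI := hσ
    have hconj : Continuous (fun z : ↥H => h * z * h⁻¹) :=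
      (continuous_const.mul continuous_id).mul continuous_const
    have hU' : (fun z : ↥H => h * z * h⁻¹) ⁻¹' U ∈ 𝓝 (1 : ↥H) :=
      hconj.continuousAt.preimage_mem_nhds (by simpa using hU)
    have hy' := mem_sigmaCore.mp hy _ hU'
    refine map_mem_closure (f := fun z : G => (h : G) * z * (h : G)⁻¹)
      (by fun_prop) hy' ?_
    rintro x ⟨u, hu, rfl⟩
    exact ⟨h * u * h⁻¹, hu, rfl⟩
  have hSuniv : S = univ := by
    apply eq_univ_of_univ_subset
    calc univ = closure (H : Set G) := hdense.closure_eq.symm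
    _ ⊆ closure S := closure_mono hHS
    _ = S := hScl.closure_eq
  constructor
  intro x hx g
  have hgS : g ∈ S := hSuniv ▸ mem_univ g
  exact mem_iInter₂.mp hgS x hx

end Aux

/-- Let `G` be an infinite profinite group (compact, totally disconnected,
Hausdorff) having no non-trivial finite normal subgroups. If `H` is a dense subgroup of `G`
that is locally minimal in the subspace topology, then `H` is minimal. -/
theorem dense_locallyMinimal_subgroup_of_profinite_is_minimal
    (G : Type*) [Group G] [TopologicalSpace G] [IsTopologicalGroup G] [T2Space G]
    [CompactSpace G] [TotallyDisconnectedSpace G] [Infinite G]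
    (hnfn : ∀ N : Subgroup G, N.Normal → (N : Set G).Finite → N = ⊥)
    (H : Subgroup G) (hdense : Dense (H : Set G))
    (hlm : IsLocallyMinimalGroupTopology ↥H) :
    IsMinimalGroupTopology ↥H := by
  intro σ hσgrp hσT2 hσle
  have hle : (instTopologicalSpaceSubtype : TopologicalSpace ↥H) ≤ σ := by
    rw [TopologicalSpace.le_def]
    exact fun s hs => hσle s hs
  set K := sigmaCore H σ hσgrp with hKdef
  have hKH : ∀ h : ↥H, (h : G) ∈ K → h = 1 := by
    intro h hh
    by_contra hne
    have hmem : ∀ U ∈ @nhds ↥H σ 1, h ∈ @closure ↥H σ U := by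
      intro U hU
      have h1 : (h : G) ∈ closure (Subtype.val '' U) := mem_sigmaCore.mp hh U hU
      have h2 : h ∈ @closure ↥H instTopologicalSpaceSubtype U :=
        (@closure_subtype G _ (fun a => a ∈ H) h U).mpr h1
      have ho : @IsOpen ↥H σ (@closure ↥H σ U)ᶜ :=
        (isClosed_closure (s := U)).isOpen_compl
      have hcl : @IsClosed ↥H instTopologicalSpaceSubtype (@closure ↥H σ U) :=
        @IsClosed.mk ↥H instTopologicalSpaceSubtype _ (hσle _ ho)
      have hsub : @closure ↥H instTopologicalSpaceSubtype U ⊆ @closure ↥H σ U :=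
        @closure_minimal ↥H instTopologicalSpaceSubtype U (@closure ↥H σ U)
          subset_closure hcl
      exact hsub h2
    have h1 : ({h}ᶜ : Set ↥H) ∈ 𝓝 (1 : ↥H) :=
      compl_singleton_mem_nhds (fun e => hne e.symm)
    obtain ⟨Cc, hCc, hCccl, hCcsub⟩ := exists_mem_nhds_isClosed_subset h1
    have hmem2 := hmem Cc hCc
    rw [hCccl.closure_eq] at hmem2
    exact hCcsub hmem2 rfl
  have hKbot : K = ⊥ := aux_essential hnfn H hdense hlm K
    (sigmaCore_normal hdense hσgrp) sigmaCore_closed hKH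
  have hσles : @nhds ↥H σ 1 ≤ @nhds ↥H instTopologicalSpaceSubtype 1 := by
    intro A hA
    have hAc : A ∈ comap (Subtype.val : ↥H → G) (𝓝 (1 : G)) := by
      have h1 : @nhds ↥H instTopologicalSpaceSubtype 1 =
          comap (Subtype.val : ↥H → G) (𝓝 ((1 : ↥H) : G)) :=
        nhds_induced _ _
      rw [h1] at hA
      simpa using hA
    obtain ⟨O, hO, hOA⟩ := mem_comap.mp hAc
    haveI : Nonempty {U : Set ↥H // U ∈ @nhds ↥H σ 1} := ⟨⟨univ, univ_mem⟩⟩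
    have key : ∃ U : {U : Set ↥H // U ∈ @nhds ↥H σ 1},
        closure (Subtype.val '' U.1) ⊆ O := by
      apply exists_subset_nhds_of_compactSpace
      · intro U V
        refine ⟨⟨U.1 ∩ V.1, Filter.inter_mem U.2 V.2⟩, ?_, ?_⟩
        · exact closure_mono (image_mono inter_subset_left)
        · exact closure_mono (image_mono inter_subset_right)
      · intro U
        exact isClosed_closure
      · intro y hy
        have hyK : y ∈ K := by
          refine mem_sigmaCore.mpr fun U hU => ?_
          exact mem_iInter.mp hy ⟨U, hU⟩
        rw [hKbot, Subgroup.mem_bot] at hyK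
        rw [hyK]
        exact hO
    obtain ⟨U₀, hU₀⟩ := key
    refine Filter.mem_of_superset U₀.2 ?_
    intro x hx
    exact hOA (hU₀ (subset_closure ⟨x, hx, rfl⟩))
  have hτles : @nhds ↥H instTopologicalSpaceSubtype 1 ≤ @nhds ↥H σ 1 :=
    _root_.nhds_mono hle
  exact IsTopologicalGroup.ext hσgrp
    (inferInstance : @IsTopologicalGroup ↥H instTopologicalSpaceSubtype _)
    (le_antisymm hσles hτles)
end

section
/- Fix a prime p. For n, m ∈ ℕ, if the topological groups M_{p,n} = ℤ_p ⋊ C_p^{p^n} and M_{p,m} = ℤ_p ⋊ C_p^{p^m} are topologically isomorphic, then n = m; that is, the groups M_{p,n} (n ∈ ℕ) are pairwise non-isomorphic as topological groups. -/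
/-- The subgroup of `ℤ_p^*` consisting of the units congruent to `1` modulo `c`. -/
def unitsCongrOne (p : ℕ) [Fact p.Prime] (c : ℤ_[p]) : Subgroup ℤ_[p]ˣ where
  carrier := {u : ℤ_[p]ˣ | c ∣ (u : ℤ_[p]) - 1}
  one_mem' := by simp
  mul_mem' := by
    rintro u v ⟨s, hs⟩ ⟨t, ht⟩
    exact ⟨s * (v : ℤ_[p]) + t, by
      simp only [Units.val_mul]
      linear_combination (v : ℤ_[p]) * hs + ht⟩
  inv_mem' := by
    rintro u ⟨s, hs⟩
    exact ⟨-(((u⁻¹ : ℤ_[p]ˣ) : ℤ_[p]) * s), by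
      linear_combination u.inv_mul - ((u⁻¹ : ℤ_[p]ˣ) : ℤ_[p]) * hs⟩

/-- The subgroup `C_p` of `ℤ_p^*`: `C_p = 1 + pℤ_p` for odd `p`, and `C_2 = 1 + 4ℤ_2`. -/
noncomputable def padicCUnits (p : ℕ) [Fact p.Prime] : Subgroup ℤ_[p]ˣ :=
  unitsCongrOne p (if p = 2 then 4 else (p : ℤ_[p]))

/-- The subgroup `C_p^{pⁿ} = {x^{pⁿ} : x ∈ C_p}` of `ℤ_p^*`. -/
noncomputable def padicCUnitsPow (p : ℕ) [Fact p.Prime] (n : ℕ) : Subgroup ℤ_[p]ˣ :=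
  Subgroup.map (powMonoidHom (p ^ n)) (padicCUnits p)

/-- `F_p`: the torsion subgroup of `ℤ_p^*`. -/
noncomputable def padicTorsionUnits (p : ℕ) [Fact p.Prime] : Subgroup ℤ_[p]ˣ :=
  CommGroup.torsion ℤ_[p]ˣ

/-- The topological semidirect product `ℤ_p ⋊ S` of `(ℤ_p, +)` with a subgroup `S ≤ ℤ_p^*`
acting by multiplication: the underlying set is `ℤ_p × S` with multiplication
`(a, b)(c, d) = (a + b·c, b·d)` and the product topology. -/
structure PadicIntSd (p : ℕ) [Fact p.Prime] (S : Subgroup ℤ_[p]ˣ) : Type where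
  a : ℤ_[p]
  b : S

namespace PadicIntSd

variable {p : ℕ} [Fact p.Prime] {S : Subgroup ℤ_[p]ˣ}

@[ext] lemma ext {x y : PadicIntSd p S} (ha : x.a = y.a) (hb : x.b = y.b) : x = y := by
  cases x; cases y; simp_all

noncomputable instance : Mul (PadicIntSd p S) :=
  ⟨fun x y => ⟨x.a + ((x.b : ℤ_[p]ˣ) : ℤ_[p]) * y.a, x.b * y.b⟩⟩

noncomputable instance : One (PadicIntSd p S) := ⟨⟨0, 1⟩⟩

noncomputable instance : Inv (PadicIntSd p S) :=
  ⟨fun x => ⟨-((((x.b⁻¹ : S) : ℤ_[p]ˣ) : ℤ_[p]) * x.a), x.b⁻¹⟩⟩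

@[simp] lemma mul_a (x y : PadicIntSd p S) :
    (x * y).a = x.a + ((x.b : ℤ_[p]ˣ) : ℤ_[p]) * y.a := rfl
@[simp] lemma mul_b (x y : PadicIntSd p S) : (x * y).b = x.b * y.b := rfl
@[simp] lemma one_a : (1 : PadicIntSd p S).a = 0 := rfl
@[simp] lemma one_b : (1 : PadicIntSd p S).b = 1 := rfl
@[simp] lemma inv_a (x : PadicIntSd p S) :
    (x⁻¹).a = -((((x.b⁻¹ : S) : ℤ_[p]ˣ) : ℤ_[p]) * x.a) := rfl
@[simp] lemma inv_b (x : PadicIntSd p S) : (x⁻¹).b = x.b⁻¹ := rfl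

noncomputable instance : Group (PadicIntSd p S) where
  mul_assoc x y z := by
    ext
    · simp only [mul_a, mul_b, Subgroup.coe_mul, Units.val_mul]; ring
    · simp [mul_assoc]
  one_mul x := by ext <;> simp
  mul_one x := by ext <;> simp
  inv_mul_cancel x := by ext <;> simp

/-- The topology on `ℤ_p ⋊ S`: the product topology of `ℤ_p × S`
(`S` carrying the subspace topology from `ℤ_p`). -/
noncomputable instance : TopologicalSpace (PadicIntSd p S) :=
  TopologicalSpace.induced
    (fun x => ((x.a, ((x.b : ℤ_[p]ˣ) : ℤ_[p])) : ℤ_[p] × ℤ_[p])) inferInstance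

end PadicIntSd


open Finset

variable {p : ℕ} [hp : Fact p.Prime]

/-- exponent: 2 if p = 2 else 1 -/
def pe (p : ℕ) : ℕ := if p = 2 then 2 else 1

lemma pe_pos : 0 < pe p := by unfold pe; split <;> norm_num

lemma not_isUnit_p : ¬ IsUnit (p : ℤ_[p]) := by
  rw [PadicInt.isUnit_iff, PadicInt.norm_p]
  have : (1:ℝ) < p := by exact_mod_cast hp.out.one_lt
  intro h
  have := inv_lt_one_of_one_lt₀ this
  rw [h] at this; exact lt_irrefl _ this

lemma isUnit_one_add_p_mul (z : ℤ_[p]) : IsUnit (1 + (p:ℤ_[p]) * z) := by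
  rw [PadicInt.isUnit_iff]
  rcases lt_or_eq_of_le (PadicInt.norm_le_one (1 + (p:ℤ_[p]) * z)) with h | h
  · exfalso
    rw [PadicInt.norm_lt_one_iff_dvd] at h
    rcases h with ⟨k, hk⟩
    have : (p:ℤ_[p]) ∣ 1 := ⟨k - z, by linear_combination hk⟩
    exact not_isUnit_p (isUnit_of_dvd_one this)
  · exact h


lemma sum_pow_eq {b : ℤ_[p]} (hb : (p:ℤ_[p])^(pe p) ∣ b - 1) :
    ∃ w : ℤ_[p], IsUnit w ∧ ∑ i ∈ Finset.range p, b ^ i = p * w := by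
  by_cases h2 : p = 2
  · subst h2
    norm_num [pe] at hb
    rcases hb with ⟨c, hc⟩
    refine ⟨1 + 2 * c, isUnit_one_add_p_mul (p := 2) c, ?_⟩
    have h22 : ((2:ℕ):ℤ_[2]) = (2:ℤ_[2]) := by norm_num
    rw [Finset.sum_range_succ, Finset.sum_range_one, h22]
    linear_combination hc
  · -- p odd
    have hodd : Odd p := hp.out.odd_of_ne_two h2
    simp only [pe, if_neg h2, pow_one] at hb
    rcases hb with ⟨c', hc'⟩   -- b - 1 = p * c'
    have key : (b - 1)^2 ∣ (∑ i ∈ Finset.range p, b ^ i) - p - (b - 1) * (∑ i ∈ Finset.range p, (i:ℤ_[p])) := by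
      have : (∑ i ∈ Finset.range p, b ^ i) - p - (b - 1) * (∑ i ∈ Finset.range p, (i:ℤ_[p]))
          = ∑ i ∈ Finset.range p, (b ^ i - 1 - (b-1) * i) := by
        rw [Finset.sum_sub_distrib, Finset.sum_sub_distrib, Finset.sum_const, Finset.mul_sum]
        simp [Finset.card_range]
      rw [this]
      apply Finset.dvd_sum
      intro i _
      have hgi : (∑ l ∈ Finset.range i, b ^ l) * (b - 1) = b ^ i - 1 := geom_sum_mul b i
      have hdiff : (b - 1) ∣ (∑ l ∈ Finset.range i, b ^ l) - i := by
        have : (∑ l ∈ Finset.range i, b ^ l) - i = ∑ l ∈ Finset.range i, (b ^ l - 1) := by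
          rw [Finset.sum_sub_distrib, Finset.sum_const, Finset.card_range]; simp
        rw [this]
        exact Finset.dvd_sum (fun l _ => by simpa using sub_dvd_pow_sub_pow b 1 l)
      rcases hdiff with ⟨d, hd⟩
      exact ⟨d, by linear_combination (b-1) * hd - hgi⟩
    rcases key with ⟨y, hy⟩
    rcases hodd with ⟨k, hk⟩
    have hsum : (∑ i ∈ Finset.range p, (i:ℤ_[p])) = (p : ℤ_[p]) * ((p-1)/2 : ℕ) := by
      have h1 : (∑ i ∈ Finset.range p, i) * 2 = p * (2 * k) := by
        have hpk : p - 1 = 2 * k := by omega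
        rw [Finset.sum_range_id_mul_two, hpk]
      have hq : (p-1)/2 = k := by omega
      rw [hq]
      have h2' : ((∑ i ∈ Finset.range p, (i:ℤ_[p]))) * 2 = (p:ℤ_[p]) * (k:ℕ) * 2 := by
        have := congrArg (fun t : ℕ => (t : ℤ_[p])) h1
        push_cast at this ⊢
        linear_combination this
      have : (2:ℤ_[p]) ≠ 0 := two_ne_zero
      exact mul_right_cancel₀ this h2'
    refine ⟨1 + p * (c' * ((p-1)/2 : ℕ) + c'^2 * y), isUnit_one_add_p_mul _, ?_⟩
    rw [hsum] at hy
    linear_combination hy + ((p:ℤ_[p]) * (((p-1)/2:ℕ):ℤ_[p]) + y*((b-1)+(p:ℤ_[p])*c')) * hc'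

/-- divisibility: if p^e ∣ t - 1 then p^(n+e) ∣ t^(p^n) - 1 -/
lemma dvd_pow_p_pow_sub_one {t : ℤ_[p]} (ht : (p:ℤ_[p])^(pe p) ∣ t - 1) (n : ℕ) :
    (p:ℤ_[p])^(n + pe p) ∣ t ^ (p ^ n) - 1 := by
  induction n with
  | zero => simpa using ht
  | succ n ih =>
    have hstep : (p:ℤ_[p])^(pe p) ∣ t ^ (p ^ n) - 1 :=
      dvd_trans (pow_dvd_pow _ (by omega)) ih
    rcases sum_pow_eq hstep with ⟨w, -, hw⟩
    have hgeom : (∑ i ∈ Finset.range p, (t ^ (p ^ n)) ^ i) * (t ^ (p ^ n) - 1)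
        = t ^ (p ^ (n+1)) - 1 := by
      have := geom_sum_mul (t ^ (p ^ n)) p
      rwa [← pow_mul, ← pow_succ] at this
    rcases ih with ⟨m, hm⟩
    exact ⟨w * m, by rw [← hgeom, hw, hm]; ring⟩

/-- exactness for the generator 1 + p^e -/
lemma gen_pow_sub_one (n : ℕ) :
    ∃ u : ℤ_[p], IsUnit u ∧ (1 + (p:ℤ_[p])^(pe p)) ^ (p ^ n) - 1 = (p:ℤ_[p])^(n + pe p) * u := by
  induction n with
  | zero => exact ⟨1, isUnit_one, by simp⟩
  | succ n ih =>
    rcases ih with ⟨u, hu, h⟩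
    set b := (1 + (p:ℤ_[p])^(pe p)) ^ (p ^ n) with hbdef
    have hb : (p:ℤ_[p])^(pe p) ∣ b - 1 :=
      ⟨(p:ℤ_[p])^n * u, by rw [h]; ring⟩
    rcases sum_pow_eq hb with ⟨w, hw, hsw⟩
    refine ⟨u * w, hu.mul hw, ?_⟩
    have hgeom : (∑ i ∈ Finset.range p, b ^ i) * (b - 1)
        = (1 + (p:ℤ_[p])^(pe p)) ^ (p ^ (n+1)) - 1 := by
      have := geom_sum_mul b p
      rwa [hbdef, ← pow_mul, ← pow_succ] at this
    rw [← hgeom, hsw, h, show n+1+pe p = (n + pe p)+1 from by omega, pow_succ]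
    ring

/-- torsion-freeness -/
lemma eq_one_of_pow_p_pow_eq_one {t : ℤ_[p]} (ht : (p:ℤ_[p])^(pe p) ∣ t - 1) {k : ℕ}
    (h : t ^ (p ^ k) = 1) : t = 1 := by
  induction k generalizing t with
  | zero => simpa using h
  | succ k ih =>
    rcases sum_pow_eq ht with ⟨w, hw, hsw⟩
    have hgeom : (∑ i ∈ Finset.range p, t ^ i) * (t - 1) = t ^ p - 1 := geom_sum_mul t p
    have ht' : (p:ℤ_[p])^(pe p) ∣ t ^ p - 1 := by
      rcases ht with ⟨m, hm⟩
      exact ⟨m * (p * w), by rw [← hgeom, hsw, hm]; ring⟩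
    have h' : (t ^ p) ^ (p ^ k) = 1 := by
      rw [← pow_mul, ← pow_succ']; exact h
    have htp : t ^ p = 1 := ih ht' h'
    have hz : (∑ i ∈ Finset.range p, t ^ i) * (t - 1) = 0 := by rw [hgeom, htp]; ring
    have hne : (∑ i ∈ Finset.range p, t ^ i) ≠ 0 := by
      rw [hsw]
      intro h0
      rcases mul_eq_zero.mp h0 with h1 | h1
      · exact (Nat.cast_ne_zero (R := ℤ_[p])).mpr hp.out.pos.ne' h1
      · exact hw.ne_zero h1
    have := (mul_eq_zero.mp hz).resolve_left hne
    linear_combination this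


namespace PadicIntSd

variable {p : ℕ} [hp : Fact p.Prime] {S : Subgroup ℤ_[p]ˣ}

lemma pow_b (x : PadicIntSd p S) (k : ℕ) : (x ^ k).b = x.b ^ k := by
  induction k with
  | zero => simp [pow_zero]
  | succ k ih => rw [pow_succ, pow_succ, mul_b, ih]

lemma pow_a_one (a : ℤ_[p]) (k : ℕ) :
    ((⟨a, 1⟩ : PadicIntSd p S) ^ k) = ⟨(k : ℤ_[p]) * a, 1⟩ := by
  induction k with
  | zero => ext <;> simp
  | succ k ih =>
    rw [pow_succ, ih]
    ext
    · push_cast; simp; ring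
    · simp

lemma comm_formula (y z : PadicIntSd p S) :
    y * z * y⁻¹ * z⁻¹ =
      ⟨(((y.b : ℤ_[p]ˣ) : ℤ_[p]) - 1) * z.a - (((z.b : ℤ_[p]ˣ) : ℤ_[p]) - 1) * y.a, 1⟩ := by
  have hBi : ((y.b : ℤ_[p]ˣ) : ℤ_[p]) * (((y.b⁻¹ : S) : ℤ_[p]ˣ) : ℤ_[p]) = 1 := by
    rw [InvMemClass.coe_inv]; exact Units.mul_inv _
  have hDi : ((z.b : ℤ_[p]ˣ) : ℤ_[p]) * (((z.b⁻¹ : S) : ℤ_[p]ˣ) : ℤ_[p]) = 1 := by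
    rw [InvMemClass.coe_inv]; exact Units.mul_inv _
  ext
  · simp only [mul_a, mul_b, inv_a, inv_b, MulMemClass.coe_mul, Units.val_mul]
    linear_combination (-((z.b : ℤ_[p]ˣ) : ℤ_[p]) * y.a) * hBi +
      (-(((z.b⁻¹ : S) : ℤ_[p]ˣ) : ℤ_[p]) * (((z.b : ℤ_[p]ˣ) : ℤ_[p])) * z.a) * hBi - z.a * hDi
  · simp only [mul_b, inv_b]
    simp [mul_right_comm]

end PadicIntSd

section Main

variable {p : ℕ} [hp : Fact p.Prime]

lemma d_eq : (if p = 2 then (4:ℤ_[p]) else (p : ℤ_[p])) = (p:ℤ_[p]) ^ (pe p) := by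
  unfold pe
  by_cases h2 : p = 2
  · subst h2; norm_num
  · simp [h2]

lemma mem_padicCUnits_iff {t : ℤ_[p]ˣ} :
    t ∈ padicCUnits p ↔ (p:ℤ_[p]) ^ (pe p) ∣ (t : ℤ_[p]) - 1 := by
  rw [← d_eq]; exact Iff.rfl

lemma mem_pow_dvd {n : ℕ} {b : ℤ_[p]ˣ} (h : b ∈ padicCUnitsPow p n) :
    (p:ℤ_[p]) ^ (n + pe p) ∣ (b : ℤ_[p]) - 1 := by
  rcases h with ⟨t, ht, rfl⟩
  have : ((powMonoidHom (p ^ n) t : ℤ_[p]ˣ) : ℤ_[p]) = (t : ℤ_[p]) ^ (p ^ n) := by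
    simp [powMonoidHom]
  rw [this]
  exact dvd_pow_p_pow_sub_one (mem_padicCUnits_iff.mp ht) n

lemma isUnit_gen : IsUnit (1 + (p:ℤ_[p]) ^ (pe p)) := by
  have h : (p:ℤ_[p]) ^ (pe p) = (p:ℤ_[p]) * (p:ℤ_[p]) ^ (pe p - 1) := by
    rw [← pow_succ']
    congr 1
    have := pe_pos (p := p); omega
  rw [h]
  exact isUnit_one_add_p_mul _

/-- there is an element of `C_p^{pⁿ}` with `s - 1 = p^(n+e) · unit` -/
lemma exists_gen (n : ℕ) : ∃ s : (padicCUnitsPow p n), ∃ u : ℤ_[p], IsUnit u ∧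
    ((s : ℤ_[p]ˣ) : ℤ_[p]) - 1 = (p:ℤ_[p]) ^ (n + pe p) * u := by
  refine ⟨⟨(isUnit_gen (p := p)).unit ^ (p ^ n),
      Subgroup.mem_map.mpr ⟨(isUnit_gen (p := p)).unit, ?_, rfl⟩⟩, ?_⟩
  · rw [mem_padicCUnits_iff, IsUnit.unit_spec]
    exact ⟨1, by ring⟩
  · rcases gen_pow_sub_one (p := p) n with ⟨u, hu, h⟩
    refine ⟨u, hu, ?_⟩
    rw [← h]
    simp [Units.val_pow_eq_pow_val, IsUnit.unit_spec]

lemma isComm_iff (n : ℕ) (v : ℤ_[p]) :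
    (∃ y z : PadicIntSd p (padicCUnitsPow p n), y * z * y⁻¹ * z⁻¹ = ⟨v, 1⟩) ↔
      (p:ℤ_[p]) ^ (n + pe p) ∣ v := by
  constructor
  · rintro ⟨y, z, h⟩
    rw [PadicIntSd.comm_formula] at h
    have ha := congrArg PadicIntSd.a h
    simp only at ha
    rw [← ha]
    rcases mem_pow_dvd y.b.2 with ⟨m1, hm1⟩
    rcases mem_pow_dvd z.b.2 with ⟨m2, hm2⟩
    exact ⟨m1 * z.a - m2 * y.a, by linear_combination z.a * hm1 - y.a * hm2⟩
  · rintro ⟨v', rfl⟩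
    rcases exists_gen (p := p) n with ⟨s, u, hu, hs⟩
    rcases hu.exists_right_inv with ⟨w, huw⟩
    refine ⟨⟨-(w * v'), 1⟩, ⟨0, s⟩, ?_⟩
    rw [PadicIntSd.comm_formula]
    ext
    · simp only
      rw [hs]
      simp only [OneMemClass.coe_one, Units.val_one]
      linear_combination ((p:ℤ_[p]) ^ (n + pe p) * v') * huw
    · simp

lemma b_eq_one_of_isComm (n j : ℕ) (x : PadicIntSd p (padicCUnitsPow p n))
    (h : ∃ y z : PadicIntSd p (padicCUnitsPow p n), y * z * y⁻¹ * z⁻¹ = x ^ (p ^ j)) :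
    x.b = 1 := by
  rcases h with ⟨y, z, h⟩
  rw [PadicIntSd.comm_formula] at h
  have hb := congrArg PadicIntSd.b h.symm
  rw [PadicIntSd.pow_b] at hb
  have hval : ((x.b : ℤ_[p]ˣ) : ℤ_[p]) ^ (p ^ j) = 1 := by
    have := congrArg (fun t : padicCUnitsPow p n => ((t : ℤ_[p]ˣ) : ℤ_[p])) hb
    simpa using this
  have hd : (p:ℤ_[p]) ^ (pe p) ∣ ((x.b : ℤ_[p]ˣ) : ℤ_[p]) - 1 :=
    dvd_trans (pow_dvd_pow _ (by omega)) (mem_pow_dvd x.b.2)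
  have h1 : ((x.b : ℤ_[p]ˣ) : ℤ_[p]) = 1 := eq_one_of_pow_p_pow_eq_one hd hval
  exact Subtype.ext (Units.ext (by simpa using h1))

lemma le_of_mulEquiv (n m : ℕ)
    (e : PadicIntSd p (padicCUnitsPow p n) ≃* PadicIntSd p (padicCUnitsPow p m)) :
    n ≤ m := by
  by_contra hlt
  push_neg at hlt
  set N := n + pe p with hNdef
  have hN1 : N - 1 + 1 = N := by have := pe_pos (p := p); omega
  set x₀ : PadicIntSd p (padicCUnitsPow p n) := (⟨1, 1⟩ : PadicIntSd p (padicCUnitsPow p n)) with hx₀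
  have hpow : ∀ k : ℕ, x₀ ^ (p ^ k) = ⟨((p:ℤ_[p]))^k, 1⟩ := fun k => by
    rw [hx₀, PadicIntSd.pow_a_one]
    ext
    · push_cast; simp
    · simp
  have h1 : ∃ y z : PadicIntSd p (padicCUnitsPow p n), y * z * y⁻¹ * z⁻¹ = x₀ ^ (p ^ N) := by
    rcases (isComm_iff n ((p:ℤ_[p]) ^ N)).mpr dvd_rfl with ⟨y, z, h⟩
    exact ⟨y, z, by rw [h, hpow]⟩
  have h2 : ∃ y z : PadicIntSd p (padicCUnitsPow p m), y * z * y⁻¹ * z⁻¹ = (e x₀) ^ (p ^ N) := by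
    rcases h1 with ⟨y, z, h⟩
    refine ⟨e y, e z, ?_⟩
    rw [← map_inv, ← map_inv, ← map_mul, ← map_mul, ← map_mul, h, map_pow]
  have hb : (e x₀).b = 1 := b_eq_one_of_isComm m N (e x₀) h2
  have hx : e x₀ = ⟨(e x₀).a, 1⟩ := PadicIntSd.ext rfl hb
  have hpow2 : (e x₀) ^ (p ^ (N - 1)) = ⟨((p:ℤ_[p])) ^ (N - 1) * (e x₀).a, 1⟩ := by
    conv_lhs => rw [hx]
    rw [PadicIntSd.pow_a_one]
    ext
    · push_cast; simp
    · simp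
  have h3 : ∃ y z : PadicIntSd p (padicCUnitsPow p m),
      y * z * y⁻¹ * z⁻¹ = (e x₀) ^ (p ^ (N - 1)) := by
    rw [hpow2]
    exact (isComm_iff m _).mpr
      (dvd_mul_of_dvd_left (pow_dvd_pow _ (by simp only [hNdef]; omega)) _)
  rcases h3 with ⟨y, z, h⟩
  have h4 : e.symm y * e.symm z * (e.symm y)⁻¹ * (e.symm z)⁻¹ = x₀ ^ (p ^ (N - 1)) := by
    rw [← map_inv, ← map_inv, ← map_mul, ← map_mul, ← map_mul, h, ← map_pow,
      e.symm_apply_apply]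
  rw [hpow] at h4
  have h5 : (p:ℤ_[p]) ^ N ∣ (p:ℤ_[p]) ^ (N - 1) :=
    (isComm_iff n _).mp ⟨e.symm y, e.symm z, h4⟩
  rcases h5 with ⟨k, hk⟩
  have hp0 : (p:ℤ_[p]) ≠ 0 := Nat.cast_ne_zero.mpr hp.out.pos.ne'
  have hcan : (p:ℤ_[p]) ^ (N - 1) * 1 = (p:ℤ_[p]) ^ (N - 1) * ((p:ℤ_[p]) * k) := by
    rw [mul_one]
    calc (p:ℤ_[p]) ^ (N - 1) = (p:ℤ_[p]) ^ N * k := hk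
      _ = (p:ℤ_[p]) ^ (N - 1) * ((p:ℤ_[p]) * k) := by
          have hps : (p:ℤ_[p]) ^ N = (p:ℤ_[p]) ^ (N - 1) * p := by
            conv_lhs => rw [← hN1]
            rw [pow_succ]
          rw [hps]; ring
  have : (1 : ℤ_[p]) = (p:ℤ_[p]) * k := mul_left_cancel₀ (pow_ne_zero _ hp0) hcan
  exact not_isUnit_p (IsUnit.of_mul_eq_one (a := (p:ℤ_[p])) k this.symm)


end Main

/-- Fix a prime `p`. If the topological groups `M_{p,n} = ℤ_p ⋊ C_p^{pⁿ}`
and `M_{p,m} = ℤ_p ⋊ C_p^{pᵐ}` are topologically isomorphic, then `n = m`; that is, the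
groups `M_{p,n}` are pairwise non-isomorphic as topological groups. -/
theorem padic_Mpn_pairwise_nonisomorphic (p : ℕ) [Fact p.Prime] (n m : ℕ)
    (e : PadicIntSd p (padicCUnitsPow p n) ≃* PadicIntSd p (padicCUnitsPow p m))
    (he : Continuous e) (hesymm : Continuous e.symm) :
    n = m :=
  le_antisymm (le_of_mulEquiv n m e) (le_of_mulEquiv m n e.symm)
end

section
/- Let p and q be distinct primes and let α : ℤ_q × ℤ_p → ℤ_p be a continuous action of the additive group ℤ_q on the additive group ℤ_p by group automorphisms. Then the topological semidirect product ℤ_p ⋊_α ℤ_q is not hereditarily locally minimal: it has a subgroup that, with the subspace topology, is not locally minimal. -/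
/-- The (external) topological semidirect product `ℤ_p ⋊_α ℤ_q` determined by a continuous
action `α` of the additive group `ℤ_q` on the additive group `ℤ_p` by group automorphisms,
encoded as a homomorphism `φ : Multiplicative ℤ_q →* AddAut ℤ_p`.  The underlying set is
`ℤ_p × ℤ_q` with multiplication `(a, b)(c, d) = (a + α(b, c), b + d)`. -/
structure PadicActionSd (p q : ℕ) [Fact p.Prime] [Fact q.Prime]
    (φ : Multiplicative ℤ_[q] →* Multiplicative (AddAut ℤ_[p])) : Type where
  a : ℤ_[p]
  b : ℤ_[q]

namespace PadicActionSd

variable {p q : ℕ} [Fact p.Prime] [Fact q.Prime]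
  {φ : Multiplicative ℤ_[q] →* Multiplicative (AddAut ℤ_[p])}

@[ext] lemma ext {x y : PadicActionSd p q φ} (ha : x.a = y.a) (hb : x.b = y.b) : x = y := by
  cases x; cases y; simp_all

noncomputable instance : Mul (PadicActionSd p q φ) :=
  ⟨fun x y => ⟨x.a + Multiplicative.toAdd (φ (Multiplicative.ofAdd x.b)) y.a, x.b + y.b⟩⟩

noncomputable instance : One (PadicActionSd p q φ) := ⟨⟨0, 0⟩⟩

noncomputable instance : Inv (PadicActionSd p q φ) :=
  ⟨fun x => ⟨-(Multiplicative.toAdd (φ (Multiplicative.ofAdd (-x.b))) x.a), -x.b⟩⟩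

@[simp] lemma mul_a (x y : PadicActionSd p q φ) :
    (x * y).a = x.a + Multiplicative.toAdd (φ (Multiplicative.ofAdd x.b)) y.a := rfl

@[simp] lemma mul_b (x y : PadicActionSd p q φ) : (x * y).b = x.b + y.b := rfl

@[simp] lemma one_a : (1 : PadicActionSd p q φ).a = 0 := rfl

@[simp] lemma one_b : (1 : PadicActionSd p q φ).b = 0 := rfl

@[simp] lemma inv_a (x : PadicActionSd p q φ) :
    (x⁻¹).a = -(Multiplicative.toAdd (φ (Multiplicative.ofAdd (-x.b))) x.a) := rfl

@[simp] lemma inv_b (x : PadicActionSd p q φ) : (x⁻¹).b = -x.b := rfl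

noncomputable instance : Group (PadicActionSd p q φ) where
  mul_assoc x y z := by
    ext
    · simp only [mul_a, mul_b, ofAdd_add, map_mul, toAdd_mul, AddAut.add_apply, map_add, add_assoc]
    · simp [add_assoc]
  one_mul x := by ext <;> simp
  mul_one x := by ext <;> simp
  inv_mul_cancel x := by ext <;> simp

/-- The topology on `ℤ_p ⋊_α ℤ_q` : the product topology of `ℤ_p × ℤ_q`. -/
noncomputable instance : TopologicalSpace (PadicActionSd p q φ) :=
  TopologicalSpace.induced (fun x => (x.a, x.b)) inferInstance

end PadicActionSd

open Filter Topology

section AuxPadic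
variable {p q : ℕ} [Fact p.Prime] [Fact q.Prime]
  (φ : Multiplicative ℤ_[q] →* Multiplicative (AddAut ℤ_[p]))

/-- The unit by which `φ t` acts by multiplication. -/
noncomputable def uu (t : ℤ_[q]) : ℤ_[p] := Multiplicative.toAdd (φ (Multiplicative.ofAdd t)) 1

variable (hcont : Continuous fun z : ℤ_[q] × ℤ_[p] => Multiplicative.toAdd (φ (Multiplicative.ofAdd z.1)) z.2)

include hcont in
lemma phi_apply (t : ℤ_[q]) (z : ℤ_[p]) :
    Multiplicative.toAdd (φ (Multiplicative.ofAdd t)) z = z * uu φ t := by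
  have hf : Continuous fun z : ℤ_[p] => Multiplicative.toAdd (φ (Multiplicative.ofAdd t)) z :=
    hcont.comp (continuous_const.prodMk continuous_id)
  have hg : Continuous fun z : ℤ_[p] => z * uu φ t := continuous_id.mul continuous_const
  have heq : (fun z : ℤ_[p] => Multiplicative.toAdd (φ (Multiplicative.ofAdd t)) z) ∘ (Int.cast : ℤ → ℤ_[p])
      = (fun z : ℤ_[p] => z * uu φ t) ∘ (Int.cast : ℤ → ℤ_[p]) := by
    funext n
    simp only [Function.comp_apply]
    have : ((n : ℤ_[p])) = n • (1 : ℤ_[p]) := by simp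
    rw [this, map_zsmul, smul_mul_assoc, one_mul]
    simp [uu]
  exact congrFun (PadicInt.denseRange_intCast.equalizer hf hg heq) z

include hcont in
lemma uu_add (s t : ℤ_[q]) : uu φ (s + t) = uu φ t * uu φ s := by
  have : uu φ (s + t) = Multiplicative.toAdd (φ (Multiplicative.ofAdd s)) (uu φ t) := by
    simp only [uu, ofAdd_add, map_mul, toAdd_mul, AddAut.add_apply]
  rw [this, phi_apply φ hcont]

lemma uu_zero : uu φ 0 = 1 := by simp [uu]

include hcont in
lemma uu_nsmul (n : ℕ) (t : ℤ_[q]) : uu φ (n • t) = uu φ t ^ n := by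
  induction n with
  | zero => simpa using uu_zero φ
  | succ k ih => rw [succ_nsmul, uu_add φ hcont, ih, pow_succ, mul_comm]

include hcont in
lemma uu_zsmul_one (m : ℤ) (t : ℤ_[q]) (h1 : uu φ t = 1) : uu φ (m • t) = 1 := by
  have hneg : ∀ x : ℤ_[q], uu φ x = 1 → uu φ (-x) = 1 := by
    intro x hx
    have := uu_add φ hcont x (-x)
    simp [hx, uu_zero] at this
    exact this.symm
  rcases m with n | n
  · rw [Int.ofNat_eq_coe, natCast_zsmul, uu_nsmul φ hcont, h1, one_pow]
  · rw [Int.negSucc_eq, neg_smul]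
    refine hneg _ ?_
    have : ((n:ℤ) + 1) • t = (n+1) • t := by rfl
    rw [this, uu_nsmul φ hcont, h1, one_pow]

include hcont in
lemma uu_cont : Continuous (uu φ) :=
  hcont.comp (continuous_id.prodMk continuous_const)

end AuxPadic

lemma norm_q_eq_one {p q : ℕ} [Fact p.Prime] [Fact q.Prime] (hpq : p ≠ q) :
    ‖(q : ℤ_[p])‖ = 1 := by
  have h1 : ¬ ((p:ℤ) ∣ (q:ℤ)) := by
    rw [Int.natCast_dvd_natCast]
    intro h
    exact hpq ((Nat.prime_dvd_prime_iff_eq (Fact.out) (Fact.out)).mp h)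
  have := (PadicInt.norm_int_lt_one_iff_dvd (p:=p) (q:ℤ)).not.mpr h1
  push_cast at this
  have hle : ‖(q : ℤ_[p])‖ ≤ 1 := PadicInt.norm_le_one _
  linarith [lt_or_eq_of_le hle |>.resolve_left this]

lemma pow_q_step {p q : ℕ} [Fact p.Prime] [Fact q.Prime] (hpq : p ≠ q)
    (w : ℤ_[p]) (hw : ‖w - 1‖ < 1) : ‖w ^ q - 1‖ = ‖w - 1‖ := by
  have hgeom : (∑ i ∈ Finset.range q, w ^ i) * (w - 1) = w ^ q - 1 := geom_sum_mul w q
  have hdvd : (w - 1) ∣ (∑ i ∈ Finset.range q, w ^ i) - (q : ℤ_[p]) := by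
    have h : (∑ i ∈ Finset.range q, w ^ i) - (q : ℤ_[p])
        = ∑ i ∈ Finset.range q, (w ^ i - 1) := by
      rw [Finset.sum_sub_distrib]
      simp
    rw [h]
    refine Finset.dvd_sum fun i _ => ?_
    simpa using sub_dvd_pow_sub_pow w 1 i
  obtain ⟨E, hE⟩ := hdvd
  have hnormE : ‖(w-1) * E‖ < 1 :=
    lt_of_le_of_lt (by
      rw [norm_mul]
      calc ‖w-1‖ * ‖E‖ ≤ ‖w-1‖ * 1 := by
            exact mul_le_mul_of_nonneg_left (PadicInt.norm_le_one E) (norm_nonneg _)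
        _ = ‖w-1‖ := mul_one _) hw
  have hsum : ‖∑ i ∈ Finset.range q, w ^ i‖ = 1 := by
    have hq1 : ‖(q : ℤ_[p])‖ = 1 := norm_q_eq_one hpq
    have hrepr : (∑ i ∈ Finset.range q, w ^ i) = (q : ℤ_[p]) + (w-1) * E := by
      rw [← hE]; ring
    rw [hrepr]
    have h2 : ‖(q : ℤ_[p]) + (w-1)*E‖ ≤ max ‖(q : ℤ_[p])‖ ‖(w-1)*E‖ :=
      PadicInt.nonarchimedean _ _
    have h3 : ‖(q : ℤ_[p])‖ ≤ max ‖(q : ℤ_[p]) + (w-1)*E‖ ‖(w-1)*E‖ := by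
      have := PadicInt.nonarchimedean ((q : ℤ_[p]) + (w-1)*E) (-((w-1)*E))
      simpa using this
    rw [hq1] at h2 h3
    rcases max_cases ‖(q : ℤ_[p]) + (w-1)*E‖ ‖(w-1)*E‖ with ⟨he, _⟩ | ⟨he, _⟩
    · rw [he] at h3
      exact le_antisymm (h2.trans (max_le le_rfl hnormE.le)) h3
    · rw [he] at h3; linarith
  rw [← hgeom, norm_mul, hsum, one_mul]

section ExistsB
variable {p q : ℕ} [Fact p.Prime] [Fact q.Prime]
  (φ : Multiplicative ℤ_[q] →* Multiplicative (AddAut ℤ_[p]))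
  (hcont : Continuous fun z : ℤ_[q] × ℤ_[p] => Multiplicative.toAdd (φ (Multiplicative.ofAdd z.1)) z.2)

include hcont in
lemma exists_B (hpq : p ≠ q) : ∃ B : ℕ, uu φ ((q:ℤ_[q])^B) = 1 := by
  set v := uu φ (1 : ℤ_[q]) with hv
  have hval : ∀ n : ℕ, uu φ ((q:ℤ_[q])^n) = v ^ (q^n) := by
    intro n
    have h : ((q:ℤ_[q])^n) = (q^n : ℕ) • (1:ℤ_[q]) := by
      rw [nsmul_eq_mul, mul_one]; push_cast; ring
    rw [h, uu_nsmul φ hcont]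
  have htend0 : Tendsto (fun n : ℕ => ((q:ℤ_[q])^n)) atTop (𝓝 0) := by
    rw [tendsto_zero_iff_norm_tendsto_zero]
    have h : ∀ n : ℕ, ‖((q:ℤ_[q])^n)‖ = ((q:ℝ)⁻¹)^n := by
      intro n
      induction n with
      | zero => simp
      | succ k ih => rw [pow_succ, norm_mul, ih, PadicInt.norm_p, pow_succ]
    simp only [h]
    refine tendsto_pow_atTop_nhds_zero_of_lt_one (by positivity) ?_
    rw [inv_lt_one_iff₀]
    right
    exact_mod_cast (Fact.out : q.Prime).one_lt
  have hvt : Tendsto (fun n : ℕ => v ^ (q^n)) atTop (𝓝 1) := by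
    have h := ((uu_cont φ hcont).tendsto 0).comp htend0
    rw [uu_zero] at h
    have heq : (uu φ ∘ fun n : ℕ => ((q:ℤ_[q])^n)) = fun n : ℕ => v ^ (q^n) := by
      funext n; exact hval n
    rwa [heq] at h
  have hev : ∀ᶠ n in atTop, ‖v ^ (q^n) - 1‖ < 1 := by
    have := Metric.tendsto_nhds.mp hvt 1 one_pos
    filter_upwards [this] with n hn
    rwa [dist_eq_norm] at hn
  obtain ⟨n₀, hn₀⟩ := hev.exists
  refine ⟨n₀, ?_⟩
  set w := v ^ (q^n₀) with hw
  have hstep : ∀ m : ℕ, ‖w ^ (q^m) - 1‖ = ‖w - 1‖ ∧ ‖w ^ (q^m) - 1‖ < 1 := by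
    intro m
    induction m with
    | zero =>
      exact ⟨by rw [pow_zero, pow_one], by rw [pow_zero, pow_one]; exact hn₀⟩
    | succ k ih =>
      have h : w ^ (q^(k+1)) = (w ^ (q^k)) ^ q := by
        conv_rhs => rw [← pow_mul, ← pow_succ]
      rw [h, pow_q_step hpq _ ih.2, ih.1]
      exact ⟨rfl, hn₀⟩
  have hlim : Tendsto (fun m : ℕ => ‖w ^ (q^m) - 1‖) atTop (𝓝 0) := by
    have h1 : Tendsto (fun m : ℕ => v ^ (q ^ (m + n₀))) atTop (𝓝 1) :=
      hvt.comp (tendsto_add_atTop_nat n₀)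
    have h2 : (fun m : ℕ => v ^ (q ^ (m + n₀))) = fun m : ℕ => w ^ (q^m) := by
      funext m
      rw [hw, ← pow_mul, ← pow_add, Nat.add_comm]
    rw [h2] at h1
    have := (h1.sub (tendsto_const_nhds (x := (1:ℤ_[p])))).norm
    simpa using this
  have hconst : Tendsto (fun _ : ℕ => ‖w - 1‖) atTop (𝓝 ‖w - 1‖) := tendsto_const_nhds
  have hfun : (fun m : ℕ => ‖w ^ (q^m) - 1‖) = fun _ : ℕ => ‖w - 1‖ := by
    funext m; exact (hstep m).1
  rw [hfun] at hlim
  have h0 : ‖w - 1‖ = 0 := tendsto_nhds_unique hconst hlim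
  have hw1 : w = 1 := sub_eq_zero.mp (norm_eq_zero.mp h0)
  rw [hval n₀, ← hw, hw1]

end ExistsB

lemma cont_toZModPow {q : ℕ} [Fact q.Prime] (C : ℕ) [TopologicalSpace (ZMod (q^C))]
    [DiscreteTopology (ZMod (q^C))] :
    Continuous (PadicInt.toZModPow (p:=q) C) := by
  rw [continuous_discrete_rng]
  intro b
  by_cases hb : ∃ y, PadicInt.toZModPow (p:=q) C y = b
  · obtain ⟨y, hy⟩ := hb
    have h1 : (PadicInt.toZModPow (p:=q) C) ⁻¹' {b}
        = {z : ℤ_[q] | ‖z - y‖ ≤ (q:ℝ)^(-(C:ℤ))} := by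
      ext z
      simp only [Set.mem_preimage, Set.mem_singleton_iff, Set.mem_setOf_eq]
      rw [PadicInt.norm_le_pow_iff_mem_span_pow, ← PadicInt.ker_toZModPow,
        RingHom.mem_ker, map_sub, hy, sub_eq_zero]
    have h2 : {z : ℤ_[q] | ‖z - y‖ ≤ (q:ℝ)^(-(C:ℤ))}
        = Metric.ball y ((q:ℝ)^(-(C:ℤ)+1)) := by
      ext z
      rw [Metric.mem_ball, dist_eq_norm, Set.mem_setOf_eq,
        PadicInt.norm_le_pow_iff_norm_lt_pow_add_one]
    rw [h1, h2]
    exact Metric.isOpen_ball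
  · have : (PadicInt.toZModPow (p:=q) C) ⁻¹' {b} = ∅ := by
      ext z
      simp only [Set.mem_preimage, Set.mem_singleton_iff, Set.mem_empty_iff_false, iff_false]
      exact fun h => hb ⟨z, h⟩
    rw [this]
    exact isOpen_empty

/-- Let `p ≠ q` be distinct primes and let `α` be a continuous action of the
additive group `ℤ_q` on the additive group `ℤ_p` by group automorphisms.  Then the topological
semidirect product `ℤ_p ⋊_α ℤ_q` is not hereditarily locally minimal: it has a subgroup that,
with the subspace topology, is not locally minimal. -/
theorem padic_semidirect_product_distinct_primes_not_hereditarilyLocallyMinimal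
    (p q : ℕ) [Fact p.Prime] [Fact q.Prime] (hpq : p ≠ q)
    (φ : Multiplicative ℤ_[q] →* Multiplicative (AddAut ℤ_[p]))
    (hcont : Continuous fun z : ℤ_[q] × ℤ_[p] => Multiplicative.toAdd (φ (Multiplicative.ofAdd z.1)) z.2) :
    ∃ H : Subgroup (PadicActionSd p q φ), ¬ IsLocallyMinimalGroupTopology ↥H := by
  classical
  obtain ⟨B, hB⟩ := exists_B φ hcont hpq
  have huB : ∀ m : ℤ, uu φ ((m : ℤ_[q]) * (q:ℤ_[q])^B) = 1 := by
    intro m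
    rw [← zsmul_eq_mul]
    exact uu_zsmul_one φ hcont m _ hB
  set j : ℤ → PadicActionSd p q φ :=
    fun m => ⟨(m : ℤ_[p]), (m : ℤ_[q]) * (q:ℤ_[q])^B⟩ with hjdef
  have hja : ∀ m : ℤ, (j m).a = (m : ℤ_[p]) := fun _ => rfl
  have hjb : ∀ m : ℤ, (j m).b = (m : ℤ_[q]) * (q:ℤ_[q])^B := fun _ => rfl
  have hphi : ∀ (m : ℤ) (z : ℤ_[p]),
      Multiplicative.toAdd (φ (Multiplicative.ofAdd ((m : ℤ_[q]) * (q:ℤ_[q])^B))) z = z := by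
    intro m z; rw [phi_apply φ hcont, huB m, mul_one]
  have hjmul : ∀ m n : ℤ, j (m + n) = j m * j n := by
    intro m n
    refine PadicActionSd.ext ?_ ?_
    · rw [PadicActionSd.mul_a, hja, hja, hja, hjb, hphi]
      push_cast; ring
    · rw [PadicActionSd.mul_b, hjb, hjb, hjb]
      push_cast; ring
  have hj0 : j 0 = 1 := by
    refine PadicActionSd.ext ?_ ?_
    · rw [hja, PadicActionSd.one_a]; push_cast; ring
    · rw [hjb, PadicActionSd.one_b]; push_cast; ring
  have hjneg : ∀ m : ℤ, j (-m) = (j m)⁻¹ := by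
    intro m
    refine eq_inv_of_mul_eq_one_left ?_
    rw [← hjmul, neg_add_cancel, hj0]
  set H : Subgroup (PadicActionSd p q φ) :=
    { carrier := Set.range j
      one_mem' := ⟨0, hj0⟩
      mul_mem' := by rintro _ _ ⟨m, rfl⟩ ⟨n, rfl⟩; exact ⟨m + n, hjmul m n⟩
      inv_mem' := by rintro _ ⟨m, rfl⟩; exact ⟨-m, hjneg m⟩ } with hH
  refine ⟨H, ?_⟩
  rintro ⟨V, hV, hmin⟩
  have hGind : IsInducing (fun x : PadicActionSd p q φ => (x.a, x.b)) := ⟨rfl⟩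
  have hHind : IsInducing
      (fun h : ↥H => (((h : PadicActionSd p q φ)).a, ((h : PadicActionSd p q φ)).b)) :=
    hGind.comp IsInducing.subtypeVal
  -- extract a basic τ-neighborhood inside V
  rw [hHind.nhds_eq_comap] at hV
  obtain ⟨t₀, ht₀, hsub⟩ := Filter.mem_comap.mp hV
  have hpt : ((((1:↥H) : PadicActionSd p q φ)).a, (((1:↥H) : PadicActionSd p q φ)).b)
      = ((0:ℤ_[p]), (0:ℤ_[q])) := rfl
  rw [hpt, mem_nhds_prod_iff] at ht₀
  obtain ⟨s₁, hs₁, s₂, hs₂, hss⟩ := ht₀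
  obtain ⟨ε₁, hε₁, hball₁⟩ := Metric.mem_nhds_iff.mp hs₁
  obtain ⟨ε₂, hε₂, hball₂⟩ := Metric.mem_nhds_iff.mp hs₂
  have hqinv : (q:ℝ)⁻¹ < 1 := by
    rw [inv_lt_one_iff₀]; right
    exact_mod_cast (Fact.out : q.Prime).one_lt
  have hpinv : (p:ℝ)⁻¹ < 1 := by
    rw [inv_lt_one_iff₀]; right
    exact_mod_cast (Fact.out : p.Prime).one_lt
  obtain ⟨C, hC⟩ := exists_pow_lt_of_lt_one hε₂ hqinv
  letI : TopologicalSpace (ZMod (q^C)) := ⊥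
  haveI : DiscreteTopology (ZMod (q^C)) := ⟨rfl⟩
  haveI : IsTopologicalAddGroup (ZMod (q^C)) :=
    { continuous_add := continuous_of_discreteTopology
      continuous_neg := continuous_of_discreteTopology }
  set F : ↥H → ℤ_[p] × ZMod (q^C) := fun h =>
    (((h : PadicActionSd p q φ)).a, PadicInt.toZModPow C ((h : PadicActionSd p q φ)).b)
    with hFdef
  have hmemb : ∀ h : ↥H, ∃ m : ℤ, j m = (h : PadicActionSd p q φ) := fun h => h.2
  have haHcont : Continuous fun h : ↥H => ((h : PadicActionSd p q φ)).a :=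
    (continuous_fst.comp hGind.continuous).comp continuous_subtype_val
  have hbHcont : Continuous fun h : ↥H => ((h : PadicActionSd p q φ)).b :=
    (continuous_snd.comp hGind.continuous).comp continuous_subtype_val
  have hFτcont : Continuous F := haHcont.prodMk ((cont_toZModPow C).comp hbHcont)
  have hFadd : ∀ h₁ h₂ : ↥H, F (h₁ * h₂) = F h₁ + F h₂ := by
    intro h₁ h₂
    obtain ⟨m₁, hm₁⟩ := hmemb h₁
    have hco : ((h₁ * h₂ : ↥H) : PadicActionSd p q φ)
        = (h₁ : PadicActionSd p q φ) * (h₂ : PadicActionSd p q φ) := rfl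
    have hb1 : ((h₁ : PadicActionSd p q φ)).b = (m₁ : ℤ_[q]) * (q:ℤ_[q])^B := by
      rw [← hm₁, hjb]
    refine Prod.ext ?_ ?_
    · show ((h₁ * h₂ : ↥H) : PadicActionSd p q φ).a = _
      rw [hco, PadicActionSd.mul_a, hb1, hphi]
      rfl
    · show PadicInt.toZModPow C (((h₁ * h₂ : ↥H) : PadicActionSd p q φ)).b = _
      rw [hco, PadicActionSd.mul_b, map_add]
      rfl
  have hF1 : F (1 : ↥H) = 0 := by
    refine Prod.ext ?_ ?_
    · rfl
    · show PadicInt.toZModPow C ((1 : PadicActionSd p q φ)).b = 0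
      rw [PadicActionSd.one_b, map_zero]
  have hFneg : ∀ h : ↥H, F h⁻¹ = - F h := by
    intro h
    have h2 := hFadd h h⁻¹
    rw [mul_inv_cancel, hF1] at h2
    exact eq_neg_of_add_eq_zero_right h2.symm
  have hFinj : Function.Injective F := by
    intro h₁ h₂ hFeq
    obtain ⟨m₁, hm₁⟩ := hmemb h₁
    obtain ⟨m₂, hm₂⟩ := hmemb h₂
    have ha := congrArg Prod.fst hFeq
    have ha' : ((h₁ : PadicActionSd p q φ)).a = ((h₂ : PadicActionSd p q φ)).a := ha
    rw [← hm₁, ← hm₂, hja, hja] at ha'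
    have hm : m₁ = m₂ := Int.cast_injective ha'
    refine Subtype.ext ?_
    rw [← hm₁, ← hm₂, hm]
  -- the distinguishing open set (for the original topology)
  have hq0 : (0:ℝ) < (q:ℝ) := by exact_mod_cast (Fact.out : q.Prime).pos
  set rS : ℝ := ((q:ℝ)⁻¹)^(C+B) with hrS
  set S : Set ↥H := {h : ↥H | ‖((h : PadicActionSd p q φ)).b‖ < rS} with hSdef
  have hSopen : IsOpen S := by
    have heq : S = (fun h : ↥H => ((h : PadicActionSd p q φ)).b) ⁻¹' (Metric.ball 0 rS) := by
      ext h
      simp [hSdef, Metric.mem_ball, dist_zero_right]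
    rw [heq]
    exact Metric.isOpen_ball.preimage hbHcont
  have h1S : (1:↥H) ∈ S := by
    show ‖((1 : PadicActionSd p q φ)).b‖ < rS
    rw [PadicActionSd.one_b, norm_zero, hrS]
    exact pow_pos (inv_pos.mpr hq0) _
  -- the coarser group topology
  set σ : TopologicalSpace ↥H := TopologicalSpace.induced F inferInstance with hσ
  have hσgroup : @IsTopologicalGroup ↥H σ _ := by
    have hFc : @Continuous ↥H _ σ _ F := continuous_induced_dom
    refine { toContinuousMul := ⟨?_⟩, toContinuousInv := ⟨?_⟩ }
    · refine continuous_induced_rng.mpr ?_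
      show Continuous fun z : ↥H × ↥H => F (z.1 * z.2)
      have heq : (fun z : ↥H × ↥H => F (z.1 * z.2))
          = fun z : ↥H × ↥H => F z.1 + F z.2 := by
        funext z; exact hFadd z.1 z.2
      rw [heq]
      exact (hFc.comp continuous_fst).add (hFc.comp continuous_snd)
    · refine continuous_induced_rng.mpr ?_
      show Continuous fun z : ↥H => F z⁻¹
      have heq : (fun z : ↥H => F z⁻¹) = fun z : ↥H => -(F z) := by
        funext z; exact hFneg z
      rw [heq]
      exact hFc.neg
  have hσT2 : @T2Space ↥H σ := by
    have hemb : @IsEmbedding ↥H _ σ _ F := ⟨⟨rfl⟩, hFinj⟩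
    exact hemb.t2Space
  have hcoarser : ∀ s : Set ↥H, @IsOpen ↥H σ s → @IsOpen ↥H instTopologicalSpaceSubtype s := by
    intro s hs
    rw [hσ, isOpen_induced_iff] at hs
    obtain ⟨U, hU, rfl⟩ := hs
    exact @Continuous.isOpen_preimage ↥H _ instTopologicalSpaceSubtype _ F hFτcont U hU
  have hVσ : V ∈ @nhds ↥H σ 1 := by
    rw [hσ, nhds_induced, hF1]
    refine Filter.mem_comap.mpr ⟨Metric.ball 0 ε₁ ×ˢ {0}, ?_, ?_⟩
    · show Metric.ball (0:ℤ_[p]) ε₁ ×ˢ ({0} : Set (ZMod (q^C)))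
        ∈ 𝓝 ((0:ℤ_[p]), (0:ZMod (q^C)))
      exact prod_mem_nhds (Metric.ball_mem_nhds 0 hε₁)
        ((isOpen_discrete _).mem_nhds rfl)
    · intro h hh
      obtain ⟨hh1, hh2⟩ := hh
      apply hsub
      apply hss
      refine ⟨hball₁ hh1, hball₂ ?_⟩
      have hker : ((h : PadicActionSd p q φ)).b ∈ Ideal.span {(q:ℤ_[q])^C} := by
        rw [← PadicInt.ker_toZModPow, RingHom.mem_ker]
        exact hh2
      have hle := (PadicInt.norm_le_pow_iff_mem_span_pow _ C).mpr hker
      rw [Metric.mem_ball, dist_zero_right]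
      calc ‖((h : PadicActionSd p q φ)).b‖ ≤ (q:ℝ)^(-(C:ℤ)) := hle
        _ = ((q:ℝ)⁻¹)^C := by rw [zpow_neg, zpow_natCast, ← inv_pow]
        _ < ε₂ := hC
  have hστ := hmin σ hσgroup hσT2 hcoarser hVσ
  have hSnhds : S ∈ @nhds ↥H σ 1 := by
    rw [hστ]
    exact @IsOpen.mem_nhds ↥H instTopologicalSpaceSubtype 1 S hSopen h1S
  rw [hσ, nhds_induced, hF1] at hSnhds
  obtain ⟨t₁, ht₁, hsub₁⟩ := Filter.mem_comap.mp hSnhds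
  rw [show (0 : ℤ_[p] × ZMod (q^C)) = ((0:ℤ_[p]), (0:ZMod (q^C))) from rfl,
    mem_nhds_prod_iff] at ht₁
  obtain ⟨u₁, hu₁, u₂, hu₂, huu⟩ := ht₁
  obtain ⟨δ, hδ, hballδ⟩ := Metric.mem_nhds_iff.mp hu₁
  obtain ⟨M, hM⟩ := exists_pow_lt_of_lt_one hδ hpinv
  set mm : ℤ := (p:ℤ)^M * (q:ℤ)^C with hmm
  set h₀ : ↥H := ⟨j mm, ⟨mm, rfl⟩⟩ with hh₀
  have hFh₀ : F h₀ ∈ u₁ ×ˢ u₂ := by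
    refine Set.mem_prod.mpr ⟨?_, ?_⟩
    · apply hballδ
      rw [Metric.mem_ball, dist_zero_right]
      show ‖(j mm).a‖ < δ
      rw [hja]
      have heq : ((mm:ℤ_[p])) = (p:ℤ_[p])^M * (q:ℤ_[p])^C := by
        rw [hmm]; push_cast; ring
      rw [heq, norm_mul, norm_pow, norm_pow, PadicInt.norm_p,
        norm_q_eq_one hpq, one_pow, mul_one]
      exact hM
    · have heq : (F h₀).2 = 0 := by
        show PadicInt.toZModPow C ((j mm).b) = 0
        rw [hjb]
        have h3 : ((mm:ℤ_[q])) * (q:ℤ_[q])^B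
            = (q:ℤ_[q])^C * ((p:ℤ_[q])^M * (q:ℤ_[q])^B) := by
          rw [hmm]; push_cast; ring
        rw [h3, map_mul, map_pow, map_natCast, ← Nat.cast_pow, ZMod.natCast_self, zero_mul]
      rw [heq]
      exact mem_of_mem_nhds hu₂
  have hmemS : h₀ ∈ S := hsub₁ (huu hFh₀)
  have hlt : ‖(j mm).b‖ < rS := hmemS
  rw [hjb] at hlt
  have heqn : ‖((mm:ℤ_[q])) * (q:ℤ_[q])^B‖ = rS := by
    have h2 : ((mm:ℤ_[q])) * (q:ℤ_[q])^B = (p:ℤ_[q])^M * (q:ℤ_[q])^(C+B) := by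
      rw [hmm]; push_cast; ring
    rw [h2, norm_mul, norm_pow, norm_pow, PadicInt.norm_p,
      norm_q_eq_one (Ne.symm hpq), one_pow, one_mul, hrS]
  rw [heqn] at hlt
  exact lt_irrefl _ hlt
end
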